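/- arXiv:2204.07697 — 9 statements merged into one kernel-verified Lean document; each statement's English description precedes it below -/
import Mathlib

section
/- Let G and G' be finite simple graphs with vertex sets V and V', equipped with initial colorings c₀ : V → C and c₀' : V' → C, and let (c_t), (c_t') denote their 1-WL colorings. Let (h_t), (h_t') be message-passing computations on G and G' with the same sequence of update functions f_t and with initial features h₀ = c₀ and h₀' = c₀'. Then for every iteration t and all vertices v ∈ V, v' ∈ V': if c_t(v) = c_t'(v') then h_t(v) = h_t'(v'). (In words: the 1-WL coloring always refines any coloring computed by a message-passing GNN.) -/
open scoped Classical

/-- The type of 1-WL colors after `t` refinement rounds, starting from colors in `C`: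
`C₀ = C`, `C_{t+1} = C_t × Multiset (C_t)`. -/
def WLColor (C : Type) : ℕ → Type
  | 0 => C
  | t + 1 => WLColor C t × Multiset (WLColor C t)

/-- The 1-dimensional Weisfeiler-Leman colorings of a finite simple graph `G`
with initial coloring `c0`:
`c_{t+1}(v) = (c_t(v), {{c_t(u) : u ∈ N(v)}})`. -/
noncomputable def wlColoring {V C : Type} [Fintype V] (G : SimpleGraph V)
    (c0 : V → C) : (t : ℕ) → V → WLColor C t
  | 0 => c0
  | t + 1 => fun v =>
      (wlColoring G c0 t v, (G.neighborFinset v).val.map (wlColoring G c0 t))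

/-- A message-passing computation on a finite simple graph `G` with initial features
`h0 : V → X 0` and update functions `f t : X t → Multiset (X t) → X (t+1)`:
`h_{t+1}(v) = f_t (h_t(v), {{h_t(u) : u ∈ N(v)}})`. -/
noncomputable def mpnn {V : Type} [Fintype V] (G : SimpleGraph V)
    {X : ℕ → Type} (h0 : V → X 0)
    (f : (t : ℕ) → X t → Multiset (X t) → X (t + 1)) : (t : ℕ) → V → X t
  | 0 => h0
  | t + 1 => fun v =>
      f t (mpnn G h0 f t v) ((G.neighborFinset v).val.map (mpnn G h0 f t))

noncomputable def wlDecode {X : ℕ → Type}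
    (f : (t : ℕ) → X t → Multiset (X t) → X (t + 1)) :
    (t : ℕ) → WLColor (X 0) t → X t
  | 0 => id
  | t + 1 => fun p => f t (wlDecode f t p.1) (p.2.map (wlDecode f t))

theorem mpnn_eq_decode {V : Type} [Fintype V] (G : SimpleGraph V)
    {X : ℕ → Type} (f : (t : ℕ) → X t → Multiset (X t) → X (t + 1))
    (c0 : V → X 0) (t : ℕ) (v : V) :
    mpnn G c0 f t v = wlDecode f t (wlColoring G c0 t v) := by
  induction t generalizing v with
  | zero => rfl
  | succ t ih =>
      simp only [mpnn, wlColoring, wlDecode, Multiset.map_map]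
      congr 1
      · exact ih v
      · exact Multiset.map_congr rfl (fun u _ => ih u)

/-- The 1-WL coloring refines any coloring computed by a message-passing GNN:
if two nodes (possibly in different graphs) receive the same 1-WL color at
iteration `t`, then any message-passing computation started from the same
initial coloring and using the same update functions assigns them the same
feature at iteration `t`. -/
theorem wl_refines_mpnn {V V' : Type} [Fintype V] [Fintype V']
    (G : SimpleGraph V) (G' : SimpleGraph V')
    {X : ℕ → Type} (f : (t : ℕ) → X t → Multiset (X t) → X (t + 1))
    (c0 : V → X 0) (c0' : V' → X 0)
    (t : ℕ) (v : V) (v' : V')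
    (hc : wlColoring G c0 t v = wlColoring G' c0' t v') :
    mpnn G c0 f t v = mpnn G' c0' f t v' := by
  rw [mpnn_eq_decode, mpnn_eq_decode, hc]
end

section
/- Let G and G' be finite simple graphs with vertex sets V and V', equipped with initial colorings c₀ : V → C and c₀' : V' → C, and let (c_t), (c_t') denote their 1-WL colorings. Let (h_t), (h_t') be message-passing computations on G and G' with the same sequence of update functions f_t and with initial features h₀ = c₀ and h₀' = c₀'. If every update function f_t is injective, then for every iteration t and all v ∈ V, v' ∈ V': h_t(v) = h_t'(v') if and only if c_t(v) = c_t'(v'). (Injective aggregate/update operations suffice for a message-passing GNN to match the discriminative power of the 1-WL algorithm.) -/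
open scoped Classical

lemma multiset_map_iff_aux {α β γ δ : Type*} (s : Multiset α) (s' : Multiset β)
    (g : α → γ) (g' : β → γ) (k : α → δ) (k' : β → δ)
    (H : ∀ a b, (g a = g' b ↔ k a = k' b)) :
    s.map g = s'.map g' ↔ s.map k = s'.map k' := by
  rw [← Multiset.rel_eq, ← Multiset.rel_eq, Multiset.rel_map, Multiset.rel_map]
  constructor
  · exact fun h => h.mono (fun a _ b _ hr => (H a b).mp hr)
  · exact fun h => h.mono (fun a _ b _ hr => (H a b).mpr hr)

theorem mpnn_wl_aux {X : ℕ → Type} (f : (t : ℕ) → X t → Multiset (X t) → X (t + 1))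
    (hinj : ∀ t, Function.Injective (fun p : X t × Multiset (X t) => f t p.1 p.2)) :
    ∀ t, ∀ {V V' : Type} [Fintype V] [Fintype V'] (G : SimpleGraph V) (G' : SimpleGraph V')
      (c0 : V → X 0) (c0' : V' → X 0) (v : V) (v' : V'),
      mpnn G c0 f t v = mpnn G' c0' f t v' ↔ wlColoring G c0 t v = wlColoring G' c0' t v' := by
  intro t
  induction t with
  | zero => intro V V' _ _ G G' c0 c0' v v'; rfl
  | succ t IH =>
    intro V V' _ _ G G' c0 c0' v v'
    show f t _ _ = f t _ _ ↔ (_, _) = (_, _)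
    rw [Prod.mk.injEq]
    constructor
    · intro h
      have h2 : ((mpnn G c0 f t v, (G.neighborFinset v).val.map (mpnn G c0 f t)) :
          X t × Multiset (X t)) =
          (mpnn G' c0' f t v', (G'.neighborFinset v').val.map (mpnn G' c0' f t)) :=
        hinj t h
      obtain ⟨h1, hm⟩ := Prod.mk.inj h2
      exact ⟨(IH G G' c0 c0' v v').mp h1,
        (multiset_map_iff_aux _ _ _ _ _ _ (fun a b => IH G G' c0 c0' a b)).mp hm⟩
    · rintro ⟨h1, hm⟩
      have h1' := (IH G G' c0 c0' v v').mpr h1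
      have hm' := (multiset_map_iff_aux _ _ _ _ _ _ (fun a b => IH G G' c0 c0' a b)).mpr hm
      rw [h1', hm']
/-- If every update function of a message-passing GNN is an injective function of the pair
(own feature, multiset of neighbor features), then the GNN's node features have exactly the
discriminative power of the 1-WL colorings: two nodes (possibly in different graphs) get
equal features at iteration `t` iff they get equal 1-WL colors at iteration `t`. -/
theorem injective_mpnn_matches_wl {V V' : Type} [Fintype V] [Fintype V']
    (G : SimpleGraph V) (G' : SimpleGraph V')
    {X : ℕ → Type} (f : (t : ℕ) → X t → Multiset (X t) → X (t + 1))
    (hinj : ∀ t, Function.Injective (fun p : X t × Multiset (X t) => f t p.1 p.2))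
    (c0 : V → X 0) (c0' : V' → X 0)
    (t : ℕ) (v : V) (v' : V') :
    mpnn G c0 f t v = mpnn G' c0' f t v'
      ↔ wlColoring G c0 t v = wlColoring G' c0' t v' := by
  exact mpnn_wl_aux f hinj t G G' c0 c0' v v'
end

section
/- Let H be a finite connected simple graph with at least 3 vertices that is not a star, where a star is a graph having a vertex adjacent to all other vertices and containing no further edges. Then there exist finite simple graphs G and G' with constant equal initial colorings such that for every iteration t the multisets of 1-WL colors agree, {{c_t(v) : v ∈ V}} = {{c_t'(v') : v' ∈ V'}}, yet the number of induced subgraphs of G isomorphic to H differs from the number of induced subgraphs of G' isomorphic to H. (Hence message-passing GNNs cannot count induced subgraphs for any connected pattern of 3 or more nodes except star-shaped patterns.) -/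
/-!
In a `d`-regular graph every vertex receives the same 1-WL color at every round, so two
`d`-regular graphs of the same order are never separated by 1-WL.  It therefore suffices to find
two `(k - 1)`-regular graphs on `2k` vertices (`k = |H|`), one containing `H` as an induced
subgraph and one not.  The first is the twisted double of `H`: two copies of `H`, with `(u, 0)`
and `(v, 1)` joined iff `u ≠ v` are non-adjacent in `H`.  If `H` is not complete, the twisted
double of the complete graph, i.e. two disjoint copies of `K_k`, has only complete connected
induced subgraphs.  If `H = K_k` with `k ≥ 3`, the twisted double of the empty graph is bipartite
and so contains no triangle.
-/

open scoped Classical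

/-- A star is a graph having a vertex adjacent to all other vertices and no further edges. -/
def SimpleGraph.IsStar {W : Type} (H : SimpleGraph W) : Prop :=
  ∃ v : W, ∀ a b : W, H.Adj a b ↔ (a = v ∨ b = v) ∧ a ≠ b

/-- The number of induced subgraphs of `G` isomorphic to `H`, i.e. the number of vertex
subsets `S` such that the subgraph of `G` induced on `S` is isomorphic to `H`. -/
noncomputable def inducedSubgraphCount {V W : Type} [Fintype V]
    (G : SimpleGraph V) (H : SimpleGraph W) : ℕ :=
  Nat.card {S : Finset V // Nonempty (G.induce (S : Set V) ≃g H)}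

open SimpleGraph

section WL

variable {V V' C : Type} [Fintype V] [Fintype V']

def wlRegularColor (c : C) (d : ℕ) : (t : ℕ) → WLColor C t
  | 0 => c
  | t + 1 => (wlRegularColor c d t, Multiset.replicate d (wlRegularColor c d t))

theorem wlColoring_eq_wlRegularColor {G : SimpleGraph V} [G.LocallyFinite] {d : ℕ}
    (hG : G.IsRegularOfDegree d) (c : C) (t : ℕ) (v : V) :
    wlColoring G (fun _ => c) t v = wlRegularColor c d t := by
  induction t generalizing v with
  | zero => rfl
  | succ t ih =>
    change (wlColoring G (fun _ => c) t v, _) = (wlRegularColor c d t, _)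
    rw [ih v, Multiset.map_congr rfl fun u _ => ih u, Multiset.map_const', Finset.card_val,
      card_neighborFinset_eq_degree]
    congr 2
    -- `wlColoring` counts neighbours with the classical instance, `hG` with `G.LocallyFinite`
    convert hG.degree_eq v

theorem map_wlColoring_univ_eq_of_isRegularOfDegree {G : SimpleGraph V} {G' : SimpleGraph V'}
    [G.LocallyFinite] [G'.LocallyFinite] {d : ℕ} (hcard : Fintype.card V = Fintype.card V')
    (hG : G.IsRegularOfDegree d) (hG' : G'.IsRegularOfDegree d) (c : C) (t : ℕ) :
    Multiset.map (wlColoring G (fun _ => c) t) Finset.univ.val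
      = Multiset.map (wlColoring G' (fun _ => c) t) Finset.univ.val := by
  rw [Multiset.map_congr rfl fun v _ => wlColoring_eq_wlRegularColor hG c t v,
    Multiset.map_congr rfl fun v _ => wlColoring_eq_wlRegularColor hG' c t v,
    Multiset.map_const', Multiset.map_const', Finset.card_val, Finset.card_val,
    Finset.card_univ, Finset.card_univ, hcard]

end WL

theorem SimpleGraph.IsRegularOfDegree.of_iso {V V' : Type*} {G : SimpleGraph V}
    {G' : SimpleGraph V'} [G.LocallyFinite] [G'.LocallyFinite] {d : ℕ}
    (hG : G.IsRegularOfDegree d) (e : G ≃g G') : G'.IsRegularOfDegree d := fun w => by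
  rw [← e.apply_symm_apply w, e.degree_eq, hG.degree_eq]

theorem inducedSubgraphCount_pos_iff {V W : Type} [Fintype V] (G : SimpleGraph V)
    (H : SimpleGraph W) : 0 < inducedSubgraphCount G H ↔ H ⊴ G := by
  rw [inducedSubgraphCount, Nat.card_pos_iff, isIndContained_iff_exists_iso_induce]
  constructor
  · rintro ⟨⟨S, ⟨e⟩⟩, -⟩
    exact ⟨S, ⟨e.symm⟩⟩
  · rintro ⟨s, ⟨e⟩⟩
    refine ⟨⟨s.toFinset, ⟨?_⟩⟩, inferInstance⟩
    rw [Set.coe_toFinset]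
    exact e.symm

namespace SimpleGraph

variable {V W : Type*}

def twistedDouble (H : SimpleGraph V) : SimpleGraph (V × Bool) where
  Adj p q := p.1 ≠ q.1 ∧ (H.Adj p.1 q.1 ↔ p.2 = q.2)
  symm := ⟨fun p q h => ⟨h.1.symm, by rw [H.adj_comm, eq_comm]; exact h.2⟩⟩
  loopless := ⟨fun p h => h.1 rfl⟩

variable {H : SimpleGraph V}

@[simp]
theorem twistedDouble_adj {p q : V × Bool} :
    H.twistedDouble.Adj p q ↔ p.1 ≠ q.1 ∧ (H.Adj p.1 q.1 ↔ p.2 = q.2) :=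
  Iff.rfl

theorem isIndContained_twistedDouble : H ⊴ H.twistedDouble :=
  ⟨{ toFun := fun v => (v, true)
     inj' := fun _ _ h => congrArg Prod.fst h
     map_rel_iff' := ⟨fun h => (twistedDouble_adj.1 h).2.2 rfl,
       fun h => twistedDouble_adj.2 ⟨h.ne, iff_of_true h rfl⟩⟩ }⟩

/-- Above each `v ≠ u` lies exactly one neighbour of `(u, b)`, in the layer that the adjacency
of `u` and `v` in `H` dictates. -/
noncomputable def twistedDoubleNeighborSetEquiv (H : SimpleGraph V) (p : V × Bool) :
    H.twistedDouble.neighborSet p ≃ {v : V // v ≠ p.1} where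
  toFun q := ⟨q.1.1, (twistedDouble_adj.1 q.2).1.symm⟩
  invFun v := ⟨(v.1, if H.Adj p.1 v.1 then p.2 else !p.2), twistedDouble_adj.2 ⟨Ne.symm v.2, by
    by_cases h : H.Adj p.1 v.1 <;> simp [h]⟩⟩
  left_inv := by
    rintro ⟨⟨v, b⟩, hvb⟩
    obtain ⟨-, hb⟩ := twistedDouble_adj.1 hvb
    refine Subtype.ext (Prod.ext rfl ?_)
    dsimp only
    split_ifs with h
    · exact hb.1 h
    · exact (Bool.eq_not.2 (Ne.symm (mt hb.2 h))).symm
  right_inv _ := rfl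

theorem twistedDouble_isRegularOfDegree [Fintype V] (H : SimpleGraph V) :
    H.twistedDouble.IsRegularOfDegree (Fintype.card V - 1) := fun p => by
  rw [← card_neighborSet_eq_degree, Fintype.card_congr (twistedDoubleNeighborSetEquiv H p)]
  simp

/-- The twisted double of `⊤` is two disjoint cliques; a connected graph meets only one. -/
theorem eq_top_of_embedding_twistedDouble_top {H : SimpleGraph W} (hconn : H.Connected)
    (f : H ↪g (⊤ : SimpleGraph V).twistedDouble) : H = ⊤ := by
  have hlayer : ∀ x y, H.Reachable x y → (f x).2 = (f y).2 := by
    rintro x y ⟨w⟩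
    induction w with
    | nil => rfl
    | cons h _ ih =>
      obtain ⟨hfst, hsnd⟩ := twistedDouble_adj.1 (f.map_rel_iff.2 h)
      exact (hsnd.1 hfst).trans ih
  ext x y
  refine ⟨Adj.ne, fun hxy => f.map_rel_iff.1 ?_⟩
  have hsnd := hlayer x y (hconn.preconnected x y)
  have hfst : (f x).1 ≠ (f y).1 := fun h => hxy (f.injective (Prod.ext h hsnd))
  exact twistedDouble_adj.2 ⟨hfst, iff_of_true hfst hsnd⟩

theorem card_le_two_of_embedding_twistedDouble_bot [Fintype W]
    (f : (⊤ : SimpleGraph W) ↪g (⊥ : SimpleGraph V).twistedDouble) :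
    Fintype.card W ≤ 2 := by
  let layer : (⊥ : SimpleGraph V).twistedDouble.Coloring Bool :=
    Coloring.mk Prod.snd fun h heq => by simp_all
  simpa using Fintype.card_le_of_injective _ (layer.comp f.toHom).injective_of_top_hom

end SimpleGraph

theorem wl_cannot_count_induced_subgraphs_general {W : Type} [Fintype W] (H : SimpleGraph W)
    (hconn : H.Connected) (hcard : 3 ≤ Fintype.card W) :
    ∃ (n n' : ℕ) (G : SimpleGraph (Fin n)) (G' : SimpleGraph (Fin n')),
      (∀ (C : Type) (c : C) (t : ℕ),
          Multiset.map (wlColoring G (fun _ => c) t) Finset.univ.val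
            = Multiset.map (wlColoring G' (fun _ => c) t) Finset.univ.val)
      ∧ inducedSubgraphCount G H ≠ inducedSubgraphCount G' H := by
  obtain ⟨K, hK⟩ : ∃ K : SimpleGraph W, ¬ H ⊴ K.twistedDouble := by
    by_cases hH : H = ⊤
    · subst hH
      exact ⟨⊥, fun ⟨f⟩ => by have := card_le_two_of_embedding_twistedDouble_bot f; omega⟩
    · exact ⟨⊤, fun ⟨f⟩ => hH (eq_top_of_embedding_twistedDouble_top hconn f)⟩
  let e := Fintype.equivFin (W × Bool)
  refine ⟨_, _, H.twistedDouble.map e.toEmbedding, K.twistedDouble.map e.toEmbedding,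
    fun C c t => ?_, ?_⟩
  · exact map_wlColoring_univ_eq_of_isRegularOfDegree rfl
      ((twistedDouble_isRegularOfDegree H).of_iso (Iso.map e _))
      ((twistedDouble_isRegularOfDegree K).of_iso (Iso.map e _)) c t
  · have hG : 0 < inducedSubgraphCount (H.twistedDouble.map e.toEmbedding) H :=
      (inducedSubgraphCount_pos_iff _ H).2
        (isIndContained_twistedDouble.trans (Iso.map e _).isIndContained)
    have hG' : ¬ 0 < inducedSubgraphCount (K.twistedDouble.map e.toEmbedding) H := fun h =>
      hK (((inducedSubgraphCount_pos_iff _ H).1 h).trans (Iso.map e _).symm.isIndContained)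
    omega

/-- For any connected pattern `H` on at least 3 vertices that is not a star, there exist
graphs with constant equal initial colorings that are indistinguishable by 1-WL at every
iteration yet contain different numbers of induced copies of `H`.  Hence message-passing
GNNs cannot count induced subgraphs for any such pattern. -/
theorem wl_cannot_count_induced_subgraphs {W : Type} [Fintype W] (H : SimpleGraph W)
    (hconn : H.Connected) (hcard : 3 ≤ Fintype.card W) (hstar : ¬ H.IsStar) :
    ∃ (n n' : ℕ) (G : SimpleGraph (Fin n)) (G' : SimpleGraph (Fin n')),
      (∀ (C : Type) (c : C) (t : ℕ),
          Multiset.map (wlColoring G (fun _ => c) t) Finset.univ.val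
            = Multiset.map (wlColoring G' (fun _ => c) t) Finset.univ.val)
      ∧ inducedSubgraphCount G H ≠ inducedSubgraphCount G' H :=
  wl_cannot_count_induced_subgraphs_general H hconn hcard
end

section
/- Let X be a countable set, M a natural number, and let G be any real-valued function on the collection of finite multisets over X of cardinality at most M. Then there exist functions φ₂ : X → ℝ and φ₁ : ℝ → ℝ such that for every multiset S over X with card(S) ≤ M, G(S) = φ₁(Σ_{s ∈ S} φ₂(s)). (Any multiset function on a countable domain can be sum-decomposed.) -/
/-!
Since `ℝ` has dimension continuum over `ℚ`, a countable `X` can be sent to a `ℚ`-linearly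
independent family `φ₂` of reals. The sum `Σ_{s ∈ S} φ₂(s)` then has the multiplicities of `S`
as its coordinates, so `S ↦ Σ_{s ∈ S} φ₂(s)` is injective on all multisets and `G` factors
through it.
-/

open Cardinal

theorem Multiset.sum_map_eq_linearCombination_toFinsupp {ι M : Type*} [DecidableEq ι]
    [AddCommMonoid M] (v : ι → M) (S : Multiset ι) :
    (S.map v).sum = Finsupp.linearCombination ℕ v (Multiset.toFinsupp S) := by
  rw [Finset.sum_multiset_map_count, Finsupp.linearCombination_apply, Finsupp.sum,
    Multiset.toFinsupp_support]
  rfl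

theorem LinearIndependent.injective_multiset_sum_map {ι M : Type*} [AddCommMonoid M]
    {v : ι → M} (hv : LinearIndependent ℕ v) :
    Function.Injective fun S : Multiset ι => (S.map v).sum := by
  classical
  intro S T (hST : (S.map v).sum = (T.map v).sum)
  rw [Multiset.sum_map_eq_linearCombination_toFinsupp,
    Multiset.sum_map_eq_linearCombination_toFinsupp] at hST
  exact Multiset.toFinsupp.injective (hv hST)

theorem exists_linearIndependent_rat_real (X : Type) [Countable X] :
    ∃ v : X → ℝ, LinearIndependent ℚ v := by
  have hX : #X ≤ Module.rank ℚ ℝ := by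
    rw [Real.rank_rat_real]
    exact mk_le_aleph0.trans aleph0_le_continuum
  obtain ⟨s, hs, hs_indep⟩ := le_rank_iff_exists_linearIndependent.mp hX
  obtain ⟨e⟩ := Cardinal.eq.mp hs
  exact ⟨fun x => e.symm x, hs_indep.comp e.symm e.symm.injective⟩

/-- Any real-valued multiset function on a countable domain, restricted to multisets of
cardinality at most `M`, can be sum-decomposed: `G(S) = φ₁(Σ_{s ∈ S} φ₂(s))`. -/
theorem multiset_function_sum_decomposition (X : Type) [Countable X] (M : ℕ)
    (G : Multiset X → ℝ) :
    ∃ (φ₂ : X → ℝ) (φ₁ : ℝ → ℝ), ∀ S : Multiset X, Multiset.card S ≤ M →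
      G S = φ₁ ((S.map φ₂).sum) := by
  obtain ⟨φ₂, hφ₂⟩ := exists_linearIndependent_rat_real X
  have hinj := (hφ₂.restrict_scalars' ℕ).injective_multiset_sum_map
  exact ⟨φ₂, Function.extend _ G 0, fun S _ => (hinj.extend_apply G 0 S).symm⟩
end

section
/- Let M be a natural number and let S and T be multisets of real numbers, each of cardinality M. If for every j with 1 ≤ j ≤ M the power sums agree, Σ_{s ∈ S} s^j = Σ_{t ∈ T} t^j, then S = T. (Equivalently, the continuous map φ(s) = (s, s², …, s^M) yields an injective sum-decomposition S ↦ Σ_{s ∈ S} φ(s) ∈ ℝ^M on multisets of reals of cardinality M, so latent dimension M suffices for continuous injective multiset encodings.) -/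
/-!
Newton's identities express `k • e_k` through `e_0, …, e_{k-1}` and the power sums `p_1, …, p_k`,
so in a ring without additive torsion the first `M` power sums of a multiset determine its
elementary symmetric functions `e_0, …, e_M`. When the multiset has cardinality `M` these are,
up to sign, the coefficients of `∏ (X - a)`, whose roots recover the multiset.
-/

open Finset Polynomial

variable {R : Type*} [CommRing R]

theorem Multiset.mul_esymm_eq_sum (s : Multiset R) (k : ℕ) :
    k * s.esymm k = (-1) ^ (k + 1) *
      ∑ a ∈ HasAntidiagonal.antidiagonal k with a.1 < k,
        (-1) ^ a.1 * s.esymm a.1 * (s.map (· ^ a.2)).sum := by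
  classical
  have hpsum (j : ℕ) : ∑ x : s, (x : R) ^ j = (s.map (· ^ j)).sum := by
    rw [← map_univ_comp_coe]; rfl
  have := congrArg (MvPolynomial.aeval fun x : s ↦ (x : R)) (MvPolynomial.mul_esymm_eq_sum s R k)
  simpa only [map_mul, map_sum, map_pow, map_natCast, map_neg, map_one, MvPolynomial.psum,
    MvPolynomial.aeval_X, MvPolynomial.aeval_esymm_eq_multiset_esymm, map_univ_coe, hpsum] using this

theorem Multiset.esymm_eq_of_sum_pow_eq [IsAddTorsionFree R] {s t : Multiset R} {n : ℕ}
    (h : ∀ j, 1 ≤ j → j ≤ n → (s.map (· ^ j)).sum = (t.map (· ^ j)).sum) :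
    ∀ k ≤ n, s.esymm k = t.esymm k := by
  intro k
  induction k using Nat.strong_induction_on with
  | _ k ih =>
    intro hk
    rcases k.eq_zero_or_pos with rfl | hk_pos
    · simp [esymm]
    have hsum : ∑ a ∈ HasAntidiagonal.antidiagonal k with a.1 < k,
          (-1) ^ a.1 * s.esymm a.1 * (s.map (· ^ a.2)).sum
        = ∑ a ∈ HasAntidiagonal.antidiagonal k with a.1 < k,
          (-1) ^ a.1 * t.esymm a.1 * (t.map (· ^ a.2)).sum := by
      refine sum_congr rfl fun a ha ↦ ?_
      rw [Finset.mem_filter, HasAntidiagonal.mem_antidiagonal] at ha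
      rw [ih a.1 ha.2 (by omega), h a.2 (by omega) (by omega)]
    have hmul : k • s.esymm k = k • t.esymm k := by
      rw [nsmul_eq_mul, nsmul_eq_mul, mul_esymm_eq_sum, mul_esymm_eq_sum, hsum]
    exact (nsmul_right_inj hk_pos.ne').mp hmul

theorem Multiset.eq_of_card_eq_of_esymm_eq [IsDomain R] {s t : Multiset R}
    (hcard : card s = card t) (h : ∀ k ≤ card s, s.esymm k = t.esymm k) : s = t := by
  have hprod : (s.map fun a ↦ X - C a).prod = (t.map fun a ↦ X - C a).prod := by
    rw [prod_X_sub_X_eq_sum_esymm, prod_X_sub_X_eq_sum_esymm, ← hcard]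
    exact sum_congr rfl fun k hk ↦ by rw [h k (Nat.lt_succ_iff.mp (mem_range.mp hk))]
  simpa only [roots_multiset_prod_X_sub_C] using congrArg roots hprod

/-- Multisets of reals of cardinality `M` are determined by their first `M` power sums:
if `Σ_{s ∈ S} s^j = Σ_{t ∈ T} t^j` for all `1 ≤ j ≤ M`, then `S = T`.  Equivalently, the
continuous map `φ(s) = (s, s², …, s^M)` gives an injective sum-decomposition of multisets
of reals of cardinality `M` with latent dimension `M`. -/
theorem multiset_eq_of_power_sums_eq (M : ℕ) (S T : Multiset ℝ)
    (hS : Multiset.card S = M) (hT : Multiset.card T = M)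
    (h : ∀ j : ℕ, 1 ≤ j → j ≤ M →
      (S.map (fun s => s ^ j)).sum = (T.map (fun t => t ^ j)).sum) :
    S = T :=
  Multiset.eq_of_card_eq_of_esymm_eq (hS.trans hT.symm) fun k hk ↦
    Multiset.esymm_eq_of_sum_pow_eq h k (hk.trans hS.le)
end

section
/- Let n and k be natural numbers with n ≥ k. Consider the action of the symmetric group Perm(Fin n) on order-k tensors T : (Fin k → Fin n) → ℝ given by (σ • T)(s) = T(σ⁻¹ ∘ s). Then the real vector space of linear maps L : ((Fin k → Fin n) → ℝ) → ℝ satisfying L(σ • T) = L(T) for all σ and all T (invariant linear layers) has dimension equal to the k-th Bell number, i.e. the number of partitions of a k-element set (equivalently, the number of equivalence relations on Fin k). -/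
/-- The subspace of invariant linear layers on order-`k` tensors over `n` nodes: linear maps
`L : ((Fin k → Fin n) → ℝ) → ℝ` with `L (σ • T) = L T` for all node permutations `σ`, where
`(σ • T) s = T (σ⁻¹ ∘ s)`. -/
noncomputable def invariantLinearLayers (n k : ℕ) :
    Submodule ℝ (((Fin k → Fin n) → ℝ) →ₗ[ℝ] ℝ) where
  carrier := {L | ∀ (σ : Equiv.Perm (Fin n)) (T : (Fin k → Fin n) → ℝ),
    L (fun s => T (fun i => σ⁻¹ (s i))) = L T}
  add_mem' := by
    intro a b ha hb σ T
    simp only [LinearMap.add_apply, ha σ T, hb σ T]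
  zero_mem' := by
    intro σ T
    simp
  smul_mem' := by
    intro c a ha σ T
    simp only [LinearMap.smul_apply, ha σ T]

namespace InvLayersAux

variable {n k : ℕ}

/-- If two functions have the same kernel, there is a permutation carrying one to the other. -/
lemma exists_perm {s t : Fin k → Fin n} (h : Setoid.ker s = Setoid.ker t) :
    ∃ σ : Equiv.Perm (Fin n), ∀ i, σ (s i) = t i := by
  classical
  let e₁ : Quotient (Setoid.ker s) ≃ Set.range s := Setoid.quotientKerEquivRange s
  let e₂ : Quotient (Setoid.ker t) ≃ Set.range t := Setoid.quotientKerEquivRange t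
  let e₀ : Quotient (Setoid.ker s) ≃ Quotient (Setoid.ker t) := Quotient.congrRight
    (fun a b => by rw [h])
  let e : {x : Fin n // x ∈ Set.range s} ≃ {x : Fin n // x ∈ Set.range t} :=
    e₁.symm.trans (e₀.trans e₂)
  refine ⟨e.extendSubtype, fun i => ?_⟩
  rw [Equiv.extendSubtype_apply_of_mem e (s i) (Set.mem_range_self i)]
  have h1 : e₁.symm ⟨s i, Set.mem_range_self i⟩ = Quotient.mk _ i := by
    apply e₁.injective
    rw [Equiv.apply_symm_apply]
    rfl
  have : e ⟨s i, Set.mem_range_self i⟩ = ⟨t i, Set.mem_range_self i⟩ := by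
    show e₂ (e₀ (e₁.symm _)) = _
    rw [h1]
    rfl
  rw [this]

/-- Every setoid on `Fin k` is the kernel of some function into `Fin n` when `k ≤ n`. -/
lemma exists_rep (hnk : k ≤ n) (q : Setoid (Fin k)) :
    ∃ s : Fin k → Fin n, Setoid.ker s = q := by
  classical
  have hcard : Fintype.card (Quotient q) ≤ Fintype.card (Fin n) := by
    calc Fintype.card (Quotient q) ≤ Fintype.card (Fin k) := Fintype.card_quotient_le q
    _ ≤ Fintype.card (Fin n) := by simpa using hnk
  obtain ⟨f⟩ := Function.Embedding.nonempty_of_card_le hcard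
  refine ⟨fun i => f (Quotient.mk q i), ?_⟩
  ext a b
  constructor
  · intro hab
    exact Quotient.exact (f.injective hab)
  · intro hab
    show f _ = f _
    exact congrArg f (Quotient.sound hab)

lemma single_comp (σ : Equiv.Perm (Fin n)) (a : Fin k → Fin n) :
    (fun u : Fin k → Fin n => (Pi.single a 1 : (Fin k → Fin n) → ℝ) (fun i => σ⁻¹ (u i)))
      = (Pi.single (fun i => σ (a i)) 1 : (Fin k → Fin n) → ℝ) := by
  classical
  funext u
  by_cases hu : u = fun i => σ (a i)
  · subst hu
    have h0 : (fun i => σ⁻¹ (σ (a i))) = a := by funext i; simp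
    rw [h0, Pi.single_eq_same, Pi.single_eq_same]
  · have h1 : (fun i => σ⁻¹ (u i)) ≠ a := by
      intro hc
      apply hu
      funext i
      have := congrFun hc i
      simp [← this]
    rw [Pi.single_eq_of_ne h1, Pi.single_eq_of_ne hu]

lemma ker_comp (σ : Equiv.Perm (Fin n)) (a : Fin k → Fin n) :
    Setoid.ker (fun i => σ (a i)) = Setoid.ker a := by
  ext i j
  exact ⟨fun h => σ.injective h, fun h => congrArg σ h⟩

end InvLayersAux

/-- The space of invariant linear layers on order-`k` tensors over `n ≥ k` nodes has
dimension equal to the `k`-th Bell number, i.e. the number of equivalence relations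
on a `k`-element set. -/
theorem dim_invariant_linear_layers_eq_bell (n k : ℕ) (hnk : k ≤ n) :
    Module.finrank ℝ (invariantLinearLayers n k) = Nat.card (Setoid (Fin k)) := by
  classical
  have hfin : Finite (Setoid (Fin k)) := by
    apply Finite.of_injective (fun q : Setoid (Fin k) => q.r)
    intro a b h
    ext i j
    rw [show a.r = b.r from h]
  have : Fintype (Setoid (Fin k)) := Fintype.ofFinite _
  -- representative choice
  let rep : Setoid (Fin k) → (Fin k → Fin n) := fun q => (InvLayersAux.exists_rep hnk q).choose
  have hrep : ∀ q, Setoid.ker (rep q) = q := fun q => (InvLayersAux.exists_rep hnk q).choose_spec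
  -- invariant functionals are constant on kernel classes
  have key : ∀ (L : invariantLinearLayers n k) (a b : Fin k → Fin n),
      Setoid.ker a = Setoid.ker b →
      (L : ((Fin k → Fin n) → ℝ) →ₗ[ℝ] ℝ) (Pi.single a 1)
        = (L : ((Fin k → Fin n) → ℝ) →ₗ[ℝ] ℝ) (Pi.single b 1) := by
    intro L a b hab
    obtain ⟨σ, hσ⟩ := InvLayersAux.exists_perm hab
    have := L.2 σ (Pi.single a 1)
    rw [InvLayersAux.single_comp σ a] at this
    have hb : (fun i => σ (a i)) = b := funext hσ
    rw [hb] at this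
    exact this.symm
  -- forward map
  let F : invariantLinearLayers n k →ₗ[ℝ] (Setoid (Fin k) → ℝ) :=
    { toFun := fun L q => (L : ((Fin k → Fin n) → ℝ) →ₗ[ℝ] ℝ) (Pi.single (rep q) 1)
      map_add' := fun a b => by funext q; rfl
      map_smul' := fun c a => by funext q; rfl }
  -- backward map
  let Gmap : (Setoid (Fin k) → ℝ) → (((Fin k → Fin n) → ℝ) →ₗ[ℝ] ℝ) := fun g =>
    ∑ s : Fin k → Fin n, g (Setoid.ker s) • LinearMap.proj s
  have Gmem : ∀ g, Gmap g ∈ invariantLinearLayers n k := by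
    intro g σ T
    simp only [Gmap, LinearMap.sum_apply, LinearMap.smul_apply, LinearMap.proj_apply,
      smul_eq_mul]
    refine Fintype.sum_equiv
      ⟨fun s i => σ⁻¹ (s i), fun s i => σ (s i),
        fun s => by funext i; simp, fun s => by funext i; simp⟩ _ _ (fun s => ?_)
    show g (Setoid.ker s) * T (fun i => σ⁻¹ (s i))
      = g (Setoid.ker fun i => σ⁻¹ (s i)) * T (fun i => σ⁻¹ (s i))
    rw [InvLayersAux.ker_comp σ⁻¹ s]
  let G : (Setoid (Fin k) → ℝ) →ₗ[ℝ] invariantLinearLayers n k :=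
    { toFun := fun g => ⟨Gmap g, Gmem g⟩
      map_add' := fun a b => by
        apply Subtype.ext
        simp only [Gmap, Pi.add_apply, add_smul, Finset.sum_add_distrib]
        rfl
      map_smul' := fun c a => by
        apply Subtype.ext
        simp only [Gmap, Pi.smul_apply, smul_eq_mul, mul_smul, ← Finset.smul_sum]
        rfl }
  have hFG : ∀ g, F (G g) = g := by
    intro g
    funext q
    show (Gmap g) (Pi.single (rep q) 1) = g q
    simp only [Gmap, LinearMap.sum_apply, LinearMap.smul_apply, LinearMap.proj_apply,
      smul_eq_mul]
    rw [Finset.sum_eq_single (rep q)]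
    · rw [Pi.single_eq_same, hrep q, mul_one]
    · intro s _ hs
      rw [Pi.single_eq_of_ne hs, mul_zero]
    · intro hs
      exact absurd (Finset.mem_univ _) hs
  have hGF : ∀ L, G (F L) = L := by
    intro L
    apply Subtype.ext
    apply LinearMap.ext
    intro T
    show (Gmap (F L)) T = (L : ((Fin k → Fin n) → ℝ) →ₗ[ℝ] ℝ) T
    simp only [Gmap, LinearMap.sum_apply, LinearMap.smul_apply, LinearMap.proj_apply,
      smul_eq_mul]
    have hT : T = ∑ s : Fin k → Fin n, T s • (Pi.single s 1 : (Fin k → Fin n) → ℝ) := by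
      funext u
      rw [Finset.sum_apply]
      simp [Pi.single_apply]
    conv_rhs => rw [hT]
    rw [map_sum]
    refine Finset.sum_congr rfl (fun s _ => ?_)
    rw [map_smul, smul_eq_mul, mul_comm]
    congr 1
    exact key L _ _ (hrep (Setoid.ker s))
  let E : invariantLinearLayers n k ≃ₗ[ℝ] (Setoid (Fin k) → ℝ) :=
    { F with invFun := G, left_inv := hGF, right_inv := hFG }
  rw [E.finrank_eq, Module.finrank_pi, Nat.card_eq_fintype_card]
end

section
/- Let n, k, ℓ be natural numbers with n ≥ k + ℓ. Consider the action of Perm(Fin n) on order-k tensors T : (Fin k → Fin n) → ℝ by (σ • T)(s) = T(σ⁻¹ ∘ s), and the analogous action on order-ℓ tensors. Then the real vector space of linear maps L : ((Fin k → Fin n) → ℝ) → ((Fin ℓ → Fin n) → ℝ) satisfying L(σ • T) = σ • L(T) for all σ and all T (equivariant linear layers) has dimension equal to the (k+ℓ)-th Bell number, i.e. the number of equivalence relations on Fin (k+ℓ). -/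
/-! ### Auxiliary combinatorics: orbits of `Perm (Fin n)` on `Fin m → Fin n` -/

lemma exists_perm_of_ker_eq {m n : ℕ} {x y : Fin m → Fin n}
    (h : ∀ i j, x i = x j ↔ y i = y j) : ∃ σ : Equiv.Perm (Fin n), y = ⇑σ ∘ x := by
  classical
  let φ : {v // v ∈ Set.range x} → {v // v ∈ Set.range y} :=
    fun a => ⟨y a.2.choose, Set.mem_range_self _⟩
  have hφ : ∀ (a : {v // v ∈ Set.range x}) (i : Fin m), x i = a.1 → (φ a).1 = y i := by
    intro a i hi
    exact (h _ _).mp (a.2.choose_spec.trans hi.symm)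
  have hbij : Function.Bijective φ := by
    constructor
    · rintro ⟨a, ia, hia⟩ ⟨b, ib, hib⟩ hab
      have h1 := hφ ⟨a, ia, hia⟩ ia hia
      have h2 := hφ ⟨b, ib, hib⟩ ib hib
      have : y ia = y ib := by
        rw [← h1, ← h2, hab]
      exact Subtype.ext (show a = b by rw [← hia, ← hib]; exact (h _ _).mpr this)
    · rintro ⟨b, j, hj⟩
      refine ⟨⟨x j, Set.mem_range_self _⟩, Subtype.ext ?_⟩
      rw [hφ ⟨x j, Set.mem_range_self _⟩ j rfl, hj]
  refine ⟨(Equiv.ofBijective φ hbij).extendSubtype, funext fun i => ?_⟩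
  rw [Function.comp_apply, Equiv.extendSubtype_apply_of_mem _ _ (Set.mem_range_self i)]
  exact (hφ ⟨x i, Set.mem_range_self i⟩ i rfl).symm

lemma exists_fun_ker_eq {m n : ℕ} (hmn : m ≤ n) (s : Setoid (Fin m)) :
    ∃ x : Fin m → Fin n, Setoid.ker x = s := by
  classical
  letI : Fintype (Quotient s) := Fintype.ofFinite _
  have hcard : Fintype.card (Quotient s) ≤ Fintype.card (Fin n) := by
    calc Fintype.card (Quotient s) ≤ Fintype.card (Fin m) :=
          Fintype.card_le_of_surjective _ Quotient.mk''_surjective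
      _ ≤ Fintype.card (Fin n) := by simpa using hmn
  obtain ⟨e⟩ := Function.Embedding.nonempty_of_card_le hcard
  refine ⟨e ∘ Quotient.mk s, Setoid.ext fun i j => ?_⟩
  simp only [Setoid.ker_def, Function.comp_apply, e.injective.eq_iff, Quotient.eq]

/-- The setoid on `Fin m → Fin n` whose classes are the orbits of the relabeling action. -/
def orbitSetoid (m n : ℕ) : Setoid (Fin m → Fin n) where
  r x y := ∃ σ : Equiv.Perm (Fin n), y = ⇑σ ∘ x
  iseqv := by
    refine ⟨fun x => ⟨1, rfl⟩, ?_, ?_⟩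
    · rintro x y ⟨σ, rfl⟩
      exact ⟨σ⁻¹, by funext i; simp⟩
    · rintro x y z ⟨σ, rfl⟩ ⟨τ, rfl⟩
      exact ⟨τ * σ, rfl⟩

lemma ker_eq_of_orbit {m n : ℕ} {x y : Fin m → Fin n}
    (h : (orbitSetoid m n).r x y) : Setoid.ker x = Setoid.ker y := by
  obtain ⟨σ, rfl⟩ := h
  exact Setoid.ext fun i j => by
    simp [Setoid.ker_def, Function.comp, σ.injective.eq_iff]

lemma card_quotient_orbitSetoid {m n : ℕ} (hmn : m ≤ n) :
    Nat.card (Quotient (orbitSetoid m n)) = Nat.card (Setoid (Fin m)) := by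
  refine Nat.card_eq_of_bijective
    (Quotient.lift Setoid.ker fun x y h => ker_eq_of_orbit h) ⟨?_, ?_⟩
  · intro q1 q2
    induction q1 using Quotient.ind
    induction q2 using Quotient.ind
    rename_i x y
    intro h
    refine Quotient.sound ?_
    simp only [Quotient.lift_mk] at h
    have hk : ∀ i j, x i = x j ↔ y i = y j := by
      intro i j
      have := Setoid.ext_iff.mp h i j
      simpa [Setoid.ker_def] using this
    exact exists_perm_of_ker_eq hk
  · intro s
    obtain ⟨x, hx⟩ := exists_fun_ker_eq hmn s
    exact ⟨⟦x⟧, hx⟩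

/-! ### Invariant functions -/

/-- Invariant functions on `Fin m → Fin n`. -/
def invFuns (m n : ℕ) : Submodule ℝ ((Fin m → Fin n) → ℝ) where
  carrier := {g | ∀ (σ : Equiv.Perm (Fin n)) (x : Fin m → Fin n), g (⇑σ ∘ x) = g x}
  add_mem' := by intro a b ha hb σ x; simp [ha σ x, hb σ x]
  zero_mem' := by intro σ x; simp
  smul_mem' := by intro c a ha σ x; simp [ha σ x]

noncomputable def invFunsEquiv (m n : ℕ) :
    invFuns m n ≃ₗ[ℝ] (Quotient (orbitSetoid m n) → ℝ) where
  toFun g := Quotient.lift g.1 (by rintro x y ⟨σ, rfl⟩; exact (g.2 σ x).symm)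
  map_add' g h := by
    funext q
    induction q using Quotient.ind
    rfl
  map_smul' c g := by
    funext q
    induction q using Quotient.ind
    rfl
  invFun h := ⟨fun x => h ⟦x⟧, fun σ x => by
    exact congrArg h <| Quotient.sound ((orbitSetoid m n).symm ⟨σ, rfl⟩)⟩
  left_inv g := rfl
  right_inv h := by
    funext q
    induction q using Quotient.ind
    rfl

lemma finrank_invFuns (m n : ℕ) :
    Module.finrank ℝ (invFuns m n) = Nat.card (Quotient (orbitSetoid m n)) := by
  classical
  letI : Fintype (Quotient (orbitSetoid m n)) := Fintype.ofFinite _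
  rw [(invFunsEquiv m n).finrank_eq, Module.finrank_fintype_fun_eq_card,
    Nat.card_eq_fintype_card]

/-! ### The statement's definition -/

noncomputable def equivariantLinearLayers (n k l : ℕ) :
    Submodule ℝ (((Fin k → Fin n) → ℝ) →ₗ[ℝ] ((Fin l → Fin n) → ℝ)) where
  carrier := {L | ∀ (σ : Equiv.Perm (Fin n)) (T : (Fin k → Fin n) → ℝ),
    L (fun s => T (fun i => σ⁻¹ (s i))) = fun s' => L T (fun i => σ⁻¹ (s' i))}
  add_mem' := by
    intro a b ha hb σ T
    funext s'
    simp only [LinearMap.add_apply, Pi.add_apply, ha σ T, hb σ T]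
  zero_mem' := by
    intro σ T
    funext s'
    simp
  smul_mem' := by
    intro c a ha σ T
    funext s'
    simp only [LinearMap.smul_apply, Pi.smul_apply, ha σ T]

/-! ### Layers are equivalent to invariant pair functions -/

def invPairs (n k l : ℕ) : Submodule ℝ (((Fin l → Fin n) × (Fin k → Fin n)) → ℝ) where
  carrier := {f | ∀ (σ : Equiv.Perm (Fin n)) (p : (Fin l → Fin n) × (Fin k → Fin n)),
    f (⇑σ ∘ p.1, ⇑σ ∘ p.2) = f p}
  add_mem' := by intro a b ha hb σ p; simp [ha σ p, hb σ p]
  zero_mem' := by intro σ p; simp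
  smul_mem' := by intro c a ha σ p; simp [ha σ p]

section
variable (n k : ℕ)

/-- The delta basis tensor. -/
noncomputable def deltaT (s : Fin k → Fin n) : (Fin k → Fin n) → ℝ :=
  Pi.single s 1

lemma deltaT_apply (s t : Fin k → Fin n) :
    deltaT n k s t = if t = s then 1 else 0 := by
  classical
  rw [deltaT, Pi.single_apply]

lemma deltaT_comp (σ : Equiv.Perm (Fin n)) (s : Fin k → Fin n) :
    (fun t : Fin k → Fin n => deltaT n k s (fun i => σ⁻¹ (t i)))
      = deltaT n k (⇑σ ∘ s) := by
  funext t
  rw [deltaT_apply, deltaT_apply]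
  congr 1
  simp only [eq_iff_iff]
  constructor
  · intro h
    funext i
    have := congrArg σ (congrFun h i)
    simpa using this
  · intro h
    funext i
    rw [congrFun h i]
    simp [Function.comp]

lemma sum_deltaT (T : (Fin k → Fin n) → ℝ) :
    ∑ s : Fin k → Fin n, T s • deltaT n k s = T := by
  classical
  funext u
  rw [Finset.sum_apply]
  simp [deltaT_apply]

end

section
variable (n k l : ℕ)

noncomputable def layerOf (f : ((Fin l → Fin n) × (Fin k → Fin n)) → ℝ) :
    ((Fin k → Fin n) → ℝ) →ₗ[ℝ] ((Fin l → Fin n) → ℝ) where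
  toFun T := fun s' => ∑ s : Fin k → Fin n, f (s', s) * T s
  map_add' T U := by
    funext s'
    simp [mul_add, Finset.sum_add_distrib]
  map_smul' c T := by
    funext s'
    simp [Finset.mul_sum, mul_left_comm]

noncomputable def layersEquiv : equivariantLinearLayers n k l ≃ₗ[ℝ] invPairs n k l where
  toFun L := ⟨fun p => L.1 (deltaT n k p.2) p.1, by
    rintro σ ⟨s', s⟩
    have hL := L.2 σ (deltaT n k s)
    rw [deltaT_comp] at hL
    have := congrFun hL (⇑σ ∘ s')
    simpa [Function.comp] using this⟩
  map_add' L M := by ext p; rfl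
  map_smul' c L := by ext p; rfl
  invFun f := ⟨layerOf n k l f.1, by
    intro σ T
    funext s'
    show ∑ s : Fin k → Fin n, f.1 (s', s) * T (fun i => σ⁻¹ (s i))
      = ∑ s : Fin k → Fin n, f.1 ((fun i => σ⁻¹ (s' i)), s) * T s
    rw [← Equiv.sum_comp (Equiv.arrowCongr (Equiv.refl (Fin k)) σ)
      (fun s => f.1 (s', s) * T (fun i => σ⁻¹ (s i)))]
    refine Finset.sum_congr rfl fun u _ => ?_
    have h1 : (fun i => σ⁻¹ ((Equiv.arrowCongr (Equiv.refl (Fin k)) σ) u i)) = u := by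
      funext i; simp
    have hs : ⇑σ ∘ (fun i => σ⁻¹ (s' i)) = s' := by funext i; simp
    have h2 := f.2 σ ((fun i => σ⁻¹ (s' i)), u)
    simp only [hs] at h2
    rw [h1, show ((Equiv.refl (Fin k)).arrowCongr σ) u = ⇑σ ∘ u from rfl, h2]⟩
  left_inv L := by
    refine Subtype.ext (LinearMap.ext fun T => ?_)
    funext s'
    show ∑ s : Fin k → Fin n, L.1 (deltaT n k s) s' * T s = L.1 T s'
    conv_rhs => rw [← sum_deltaT n k T]
    rw [map_sum, Finset.sum_apply]
    refine Finset.sum_congr rfl fun s _ => ?_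
    rw [map_smul]
    simp [mul_comm]
  right_inv f := by
    refine Subtype.ext ?_
    funext p
    show ∑ s : Fin k → Fin n, f.1 (p.1, s) * deltaT n k p.2 s = f.1 p
    classical
    simp [deltaT_apply, mul_ite]

/-! ### Pairs of tuples are one long tuple -/

def pairEquiv : (Fin (k + l) → Fin n) ≃ ((Fin l → Fin n) × (Fin k → Fin n)) where
  toFun x := (fun j => x (finSumFinEquiv (Sum.inr j)), fun i => x (finSumFinEquiv (Sum.inl i)))
  invFun p := fun m => Sum.elim p.2 p.1 (finSumFinEquiv.symm m)
  left_inv x := by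
    funext m
    obtain ⟨c, rfl⟩ := finSumFinEquiv.surjective m
    rcases c with i | j <;> simp
  right_inv p := by
    refine Prod.ext ?_ ?_ <;> funext i <;> simp

lemma pairEquiv_symm_comp (σ : Equiv.Perm (Fin n)) (p : (Fin l → Fin n) × (Fin k → Fin n)) :
    (pairEquiv n k l).symm (⇑σ ∘ p.1, ⇑σ ∘ p.2) = ⇑σ ∘ (pairEquiv n k l).symm p := by
  funext m
  show Sum.elim (⇑σ ∘ p.2) (⇑σ ∘ p.1) (finSumFinEquiv.symm m)
    = σ (Sum.elim p.2 p.1 (finSumFinEquiv.symm m))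
  rcases finSumFinEquiv.symm m with i | j <;> rfl

noncomputable def pairsEquiv : invPairs n k l ≃ₗ[ℝ] invFuns (k + l) n where
  toFun f := ⟨fun x => f.1 (pairEquiv n k l x), fun σ x => f.2 σ (pairEquiv n k l x)⟩
  map_add' f g := rfl
  map_smul' c f := rfl
  invFun g := ⟨fun p => g.1 ((pairEquiv n k l).symm p), fun σ p => by
    show g.1 ((pairEquiv n k l).symm (⇑σ ∘ p.1, ⇑σ ∘ p.2)) = _
    rw [pairEquiv_symm_comp]
    exact g.2 σ _⟩
  left_inv f := by
    refine Subtype.ext ?_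
    funext p
    show f.1 (pairEquiv n k l ((pairEquiv n k l).symm p)) = f.1 p
    rw [Equiv.apply_symm_apply]
  right_inv g := by
    refine Subtype.ext ?_
    funext x
    show g.1 ((pairEquiv n k l).symm (pairEquiv n k l x)) = g.1 x
    rw [Equiv.symm_apply_apply]

end

/-! ### Main theorem -/

/-- The space of equivariant linear layers from order-`k` tensors to order-`ℓ` tensors over
`n ≥ k + ℓ` nodes has dimension equal to the `(k+ℓ)`-th Bell number, i.e. the number of
equivalence relations on a `(k+ℓ)`-element set. -/
theorem dim_equivariant_linear_layers_eq_bell (n k l : ℕ) (hn : k + l ≤ n) :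
    Module.finrank ℝ (equivariantLinearLayers n k l)
      = Nat.card (Setoid (Fin (k + l))) := by
  rw [(layersEquiv n k l).finrank_eq, (pairsEquiv n k l).finrank_eq,
    finrank_invFuns, card_quotient_orbitSetoid hn]
end

section
/- Let n, k, d, d' be natural numbers with n ≥ k. Consider the action of Perm(Fin n) on multi-channel tensors H : (Fin k → Fin n) → ℝ^d given by (σ • H)(s) = H(σ⁻¹ ∘ s). Then the real vector space of affine maps A : ((Fin k → Fin n) → ℝ^d) → ℝ^{d'} (maps of the form A(H) = L(H) + b with L linear and b ∈ ℝ^{d'}) satisfying A(σ • H) = A(H) for all σ and all H has dimension d·d'·B(k) + d', where B(k) is the k-th Bell number, i.e. the number of equivalence relations on Fin k. -/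
/-!
An invariant affine layer is `L + b` with `L` invariant, and `L H = ∑ s, L_s (H s)` where
`L_s : ℝ^d →ₗ ℝ^{d'}` is `L` restricted to the slot `s : Fin k → Fin n`. Invariance says exactly
that `L_s` is constant on orbits of index tuples under node relabelling. Two tuples lie in the same
orbit iff they have the same kernel `{(i, j) | s i = s j}`, and since `n ≥ k` every equivalence
relation on `Fin k` is such a kernel. Hence the layers are parametrised bijectively by a linear map
`ℝ^d →ₗ ℝ^{d'}` for each of the `B(k)` equivalence relations, together with the bias.
-/

/-- The subspace of invariant affine layers on `d`-channel order-`k` tensors over `n` nodes: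
maps `A : ((Fin k → Fin n) → ℝ^d) → ℝ^{d'}` of the form `A H = L H + b` with `L` linear and
`b` a constant bias, satisfying `A (σ • H) = A H` for all node permutations `σ`, where
`(σ • H) s = H (σ⁻¹ ∘ s)`. -/
noncomputable def invariantAffineLayers (n k d d' : ℕ) :
    Submodule ℝ (((Fin k → Fin n) → (Fin d → ℝ)) → (Fin d' → ℝ)) where
  carrier := {A |
    (∃ (L : ((Fin k → Fin n) → (Fin d → ℝ)) →ₗ[ℝ] (Fin d' → ℝ)) (b : Fin d' → ℝ),
        ∀ H, A H = L H + b)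
    ∧ ∀ (σ : Equiv.Perm (Fin n)) (H : (Fin k → Fin n) → (Fin d → ℝ)),
        A (fun s => H (fun i => σ⁻¹ (s i))) = A H}
  add_mem' := by
    rintro a b ⟨⟨La, ba, hLa⟩, hainv⟩ ⟨⟨Lb, bb, hLb⟩, hbinv⟩
    refine ⟨⟨La + Lb, ba + bb, fun H => ?_⟩, fun σ H => ?_⟩
    · simp only [Pi.add_apply, hLa H, hLb H, LinearMap.add_apply]
      abel
    · simp only [Pi.add_apply, hainv σ H, hbinv σ H]
  zero_mem' := by
    refine ⟨⟨0, 0, fun H => ?_⟩, fun σ H => ?_⟩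
    · simp
    · simp
  smul_mem' := by
    rintro c a ⟨⟨La, ba, hLa⟩, hainv⟩
    refine ⟨⟨c • La, c • ba, fun H => ?_⟩, fun σ H => ?_⟩
    · simp only [Pi.smul_apply, hLa H, LinearMap.smul_apply, smul_add]
    · simp only [Pi.smul_apply, hainv σ H]

open Function Equiv

instance Setoid.instFinite (α : Type*) [Finite α] : Finite (Setoid α) :=
  Finite.of_injective (fun s : Setoid α => s.r) fun _ _ h =>
    Setoid.ext fun x y => iff_of_eq (congrFun₂ h x y)

theorem Setoid.ker_comp_of_injective {α β γ : Type*} {g : β → γ} (hg : Injective g) (f : α → β) :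
    Setoid.ker (g ∘ f) = Setoid.ker f :=
  Setoid.ext fun _ _ => hg.eq_iff

theorem Setoid.exists_ker_eq_of_card_le {α β : Type*} [Fintype α] [Fintype β]
    (h : Fintype.card α ≤ Fintype.card β) (r : Setoid α) : ∃ s : α → β, Setoid.ker s = r := by
  classical
  obtain ⟨f⟩ := Function.Embedding.nonempty_of_card_le ((Fintype.card_quotient_le r).trans h)
  exact ⟨f ∘ Quotient.mk r,
    (Setoid.ker_comp_of_injective f.injective _).trans (Setoid.ker_mk_eq r)⟩

theorem Equiv.Perm.exists_comp_eq_of_ker_eq {α β : Type*} [Finite β] {s t : α → β}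
    (h : Setoid.ker s = Setoid.ker t) : ∃ σ : Perm β, σ ∘ s = t := by
  classical
  let e : Set.range s ≃ Set.range t := (Setoid.quotientKerEquivRange s).symm.trans
    ((Quotient.congrRight fun a b => by rw [h]).trans (Setoid.quotientKerEquivRange t))
  refine ⟨e.extendSubtype, funext fun i => ?_⟩
  rw [comp_apply, e.extendSubtype_apply_of_mem _ (Set.mem_range_self i)]
  have hs : (Setoid.quotientKerEquivRange s).symm ⟨s i, Set.mem_range_self i⟩ = Quotient.mk _ i :=
    (Equiv.symm_apply_eq _).2 rfl
  simp only [e, Equiv.trans_apply, hs]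
  rfl

theorem Pi.single_precomp_perm_inv {ι β V : Type*} [Fintype ι] [DecidableEq ι] [DecidableEq β]
    [Zero V] (σ : Perm β) (t : ι → β) (v : V) :
    (fun s => (Pi.single t v : (ι → β) → V) (fun i => σ⁻¹ (s i)))
      = (Pi.single (σ ∘ t) v : (ι → β) → V) :=
  Pi.single_comp_equiv (Equiv.piCongrRight fun _ : ι => σ⁻¹) t v

section OrbitAffine

variable {ι β R V W : Type*} [Fintype ι] [DecidableEq ι] [Fintype β]
  [CommRing R] [AddCommGroup V] [Module R V] [AddCommGroup W] [Module R W]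

variable (ι β R V W) in
def orbitAffine : (Setoid ι → V →ₗ[R] W) × W →ₗ[R] (((ι → β) → V) → W) where
  toFun p H := ∑ s, p.1 (Setoid.ker s) (H s) + p.2
  map_add' p q := by
    ext H
    simp only [Prod.fst_add, Prod.snd_add, LinearMap.add_apply, Finset.sum_add_distrib,
      Pi.add_apply]
    abel
  map_smul' a p := by
    ext H
    simp [Finset.smul_sum]

theorem orbitAffine_apply (p : (Setoid ι → V →ₗ[R] W) × W) (H : (ι → β) → V) :
    orbitAffine ι β R V W p H = ∑ s, p.1 (Setoid.ker s) (H s) + p.2 := rfl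

theorem orbitAffine_apply_zero (p : (Setoid ι → V →ₗ[R] W) × W) :
    orbitAffine ι β R V W p 0 = p.2 := by
  simp [orbitAffine_apply]

theorem orbitAffine_apply_single [DecidableEq β] (p : (Setoid ι → V →ₗ[R] W) × W) (t : ι → β)
    (v : V) :
    orbitAffine ι β R V W p (Pi.single t v) = p.1 (Setoid.ker t) v + p.2 := by
  rw [orbitAffine_apply,
    Fintype.sum_eq_single t fun s hs => by rw [Pi.single_eq_of_ne hs, map_zero],
    Pi.single_eq_same]

theorem orbitAffine_injective [DecidableEq β]
    (hker : ∀ r : Setoid ι, ∃ s : ι → β, Setoid.ker s = r) :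
    Injective (orbitAffine ι β R V W) := by
  refine (injective_iff_map_eq_zero _).2 fun p hp => ?_
  have hb : p.2 = 0 := by rw [← orbitAffine_apply_zero (β := β) p, hp]; rfl
  refine Prod.ext (funext fun r => LinearMap.ext fun v => ?_) hb
  obtain ⟨s, rfl⟩ := hker r
  simpa [orbitAffine_apply_single, hb] using congrFun hp (Pi.single s v)

theorem orbitAffine_relabel (p : (Setoid ι → V →ₗ[R] W) × W) (σ : Perm β) (H : (ι → β) → V) :
    orbitAffine ι β R V W p (fun s => H (fun i => σ⁻¹ (s i))) = orbitAffine ι β R V W p H := by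
  simp only [orbitAffine_apply]
  congr 1
  refine Fintype.sum_bijective (fun s i => σ⁻¹ (s i)) (σ⁻¹ : Perm β).bijective.comp_left _ _
    fun s => ?_
  exact congrArg (fun r => p.1 r _) (Setoid.ker_comp_of_injective (σ⁻¹ : Perm β).injective s).symm

theorem exists_orbitAffine_eq [DecidableEq β]
    (hker : ∀ r : Setoid ι, ∃ s : ι → β, Setoid.ker s = r)
    (L : ((ι → β) → V) →ₗ[R] W) (b : W)
    (hL : ∀ (σ : Perm β) (H : (ι → β) → V), L (fun s => H (fun i => σ⁻¹ (s i))) = L H) :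
    ∃ p, orbitAffine ι β R V W p = fun H => L H + b := by
  choose rep hrep using hker
  refine ⟨(fun r => L ∘ₗ LinearMap.single R (fun _ => V) (rep r), b), funext fun H => ?_⟩
  have hsingle : ∀ s v, L (Pi.single (rep (Setoid.ker s)) v) = L (Pi.single s v) := by
    intro s v
    obtain ⟨σ, hσ⟩ := Perm.exists_comp_eq_of_ker_eq (hrep (Setoid.ker s))
    calc L (Pi.single (rep (Setoid.ker s)) v)
        = L (fun t => (Pi.single (rep (Setoid.ker s)) v : (ι → β) → V) (fun i => σ⁻¹ (t i))) :=
          (hL σ _).symm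
      _ = L (Pi.single s v) := by rw [Pi.single_precomp_perm_inv, hσ]
  conv_rhs => rw [← Finset.univ_sum_single H, map_sum]
  simp [orbitAffine_apply, hsingle]

end OrbitAffine

theorem range_orbitAffine {n k d d' : ℕ}
    (hker : ∀ r : Setoid (Fin k), ∃ s : Fin k → Fin n, Setoid.ker s = r) :
    LinearMap.range (orbitAffine (Fin k) (Fin n) ℝ (Fin d → ℝ) (Fin d' → ℝ))
      = invariantAffineLayers n k d d' := by
  ext A
  constructor
  · rintro ⟨p, rfl⟩
    exact ⟨⟨∑ s, p.1 (Setoid.ker s) ∘ₗ LinearMap.proj s, p.2,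
      fun H => by simp [orbitAffine_apply]⟩, orbitAffine_relabel p⟩
  · rintro ⟨⟨L, b, hA⟩, hinv⟩
    obtain ⟨p, hp⟩ := exists_orbitAffine_eq hker L b fun σ H => by simpa [hA] using hinv σ H
    exact ⟨p, hp.trans (funext hA).symm⟩

/-- The space of invariant affine layers from `d`-channel order-`k` tensors over `n ≥ k`
nodes to `ℝ^{d'}` has dimension `d·d'·B(k) + d'`, where `B(k)` is the `k`-th Bell number,
i.e. the number of equivalence relations on a `k`-element set. -/
theorem dim_invariant_affine_layers (n k d d' : ℕ) (hnk : k ≤ n) :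
    Module.finrank ℝ (invariantAffineLayers n k d d')
      = d * d' * Nat.card (Setoid (Fin k)) + d' := by
  have hker : ∀ r : Setoid (Fin k), ∃ s : Fin k → Fin n, Setoid.ker s = r :=
    Setoid.exists_ker_eq_of_card_le (by simpa using hnk)
  have := Fintype.ofFinite (Setoid (Fin k))
  rw [← range_orbitAffine hker, LinearMap.finrank_range_of_inj (orbitAffine_injective hker),
    Module.finrank_prod, Module.finrank_pi_fintype, Module.finrank_linearMap]
  simp [Nat.card_eq_fintype_card, mul_comm]
end

section
/- Let T and T' be finite trees (nonempty connected acyclic simple graphs) with vertex sets V and V', both equipped with the constant initial coloring taking the same value, and let (c_t), (c_t') denote their 1-WL colorings. If there is no graph isomorphism between T and T', then there exists an iteration t at which the multisets of 1-WL colors differ: {{c_t(v) : v ∈ V}} ≠ {{c_t'(v') : v' ∈ V'}}. (The 1-WL algorithm distinguishes any pair of non-isomorphic trees.) -/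
open scoped Classical

variable {V : Type} {G : SimpleGraph V}

/-- On a geodesic walk, distances add at every support vertex. -/
lemma geodesic_split (hconn : G.Connected) {u x y : V} (p : G.Walk u x)
    (hp : p.length = G.dist u x) (hy : y ∈ p.support) :
    G.dist u y + G.dist y x = G.dist u x := by
  have hspec := p.take_spec hy
  have hlen : (p.takeUntil y hy).length + (p.dropUntil y hy).length = p.length := by
    conv_rhs => rw [← hspec]
    rw [SimpleGraph.Walk.length_append]
  have h1 := SimpleGraph.dist_le (p.takeUntil y hy)
  have h2 := SimpleGraph.dist_le (p.dropUntil y hy)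
  have h3 := hconn.dist_triangle (u := u) (v := y) (w := x)
  omega

/-- There exists a geodesic path. -/
lemma exists_geodesic (hconn : G.Connected) (u v : V) :
    ∃ p : G.Walk u v, p.IsPath ∧ p.length = G.dist u v := by
  obtain ⟨p, hp, hl⟩ := hconn.exists_path_of_dist u v
  exact ⟨p, hp, hl⟩

/-- In a tree, distances to the two endpoints of an edge differ by exactly one. -/
lemma tree_dist_step (hconn : G.Connected) (hacyc : G.IsAcyclic) {u v : V}
    (huv : G.Adj u v) (x : V) :
    G.dist u x = G.dist v x + 1 ∨ G.dist v x = G.dist u x + 1 := by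
  have hd1 : G.dist u v = 1 := (SimpleGraph.dist_eq_one_iff_adj).2 huv
  have ht1 := hconn.dist_triangle (u := u) (v := v) (w := x)
  have ht2 := hconn.dist_triangle (u := v) (v := u) (w := x)
  rw [hd1] at ht1
  rw [SimpleGraph.dist_comm (u := v) (v := u), hd1] at ht2
  by_contra hcon
  push_neg at hcon
  have heq : G.dist u x = G.dist v x := by omega
  -- both geodesics, build two distinct paths from v to x
  obtain ⟨p, hp, hpl⟩ := hconn.exists_path_of_dist u x
  obtain ⟨q, hq, hql⟩ := hconn.exists_path_of_dist v x
  have hvp : v ∉ p.support := by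
    intro hv
    have := geodesic_split hconn p hpl hv
    have hduv : G.dist u v = 1 := hd1
    have hvx : G.dist v x = G.dist u x := heq.symm
    omega
  have hr : (SimpleGraph.Walk.cons huv.symm p).IsPath := hp.cons hvp
  have := SimpleGraph.isAcyclic_iff_path_unique.mp hacyc ⟨_, hr⟩ ⟨q, hq⟩
  have hlen := congrArg (fun (z : G.Path v x) => z.1.length) this
  simp only [SimpleGraph.Walk.length_cons] at hlen
  omega

variable [Fintype V]

/-- The branch of the tree at `v` pointing away from `u`. -/
noncomputable def branch (G : SimpleGraph V) (u v : V) : Finset V :=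
  Finset.univ.filter fun x => G.dist u x = G.dist v x + 1

lemma mem_branch {u v x : V} : x ∈ branch G u v ↔ G.dist u x = G.dist v x + 1 := by
  simp [branch]

lemma root_mem_branch (hconn : G.Connected) {u v : V} (huv : G.Adj u v) :
    v ∈ branch G u v := by
  rw [mem_branch, SimpleGraph.dist_self, (SimpleGraph.dist_eq_one_iff_adj).2 huv]

lemma base_not_mem_branch {u v : V} : v ∉ branch G v u := by
  rw [mem_branch, SimpleGraph.dist_self]; omega

lemma ne_of_mem_branch {v w x : V} (h : x ∈ branch G v w) : x ≠ v := by
  rw [mem_branch] at h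
  intro he; subst he; rw [SimpleGraph.dist_self] at h; omega

/-- The second vertex of a geodesic: every `x ≠ v` lies in some branch at `v`. -/
lemma exists_branch (hconn : G.Connected) {v x : V} (hx : x ≠ v) :
    ∃ w, G.Adj v w ∧ x ∈ branch G v w := by
  obtain ⟨p, hp, hl⟩ := hconn.exists_path_of_dist v x
  cases p with
  | nil => exact absurd rfl hx.symm
  | @cons _ w _ h q =>
    refine ⟨w, h, ?_⟩
    rw [mem_branch]
    have h1 : G.dist w x ≤ q.length := SimpleGraph.dist_le q
    have h2 := hconn.dist_triangle (u := v) (v := w) (w := x)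
    have h3 : G.dist v w = 1 := (SimpleGraph.dist_eq_one_iff_adj).2 h
    simp only [SimpleGraph.Walk.length_cons] at hl
    omega

/-- Distinct branches at the same vertex are disjoint. -/
lemma branch_disjoint (hconn : G.Connected) (hacyc : G.IsAcyclic) {v w1 w2 x : V}
    (h1 : G.Adj v w1) (h2 : G.Adj v w2)
    (hx1 : x ∈ branch G v w1) (hx2 : x ∈ branch G v w2) : w1 = w2 := by
  rw [mem_branch] at hx1 hx2
  obtain ⟨p1, hp1, hl1⟩ := hconn.exists_path_of_dist w1 x
  obtain ⟨p2, hp2, hl2⟩ := hconn.exists_path_of_dist w2 x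
  have hv1 : v ∉ p1.support := by
    intro hv
    have := geodesic_split hconn p1 hl1 hv
    have : G.dist w1 v = 1 := by
      rw [SimpleGraph.dist_comm]; exact (SimpleGraph.dist_eq_one_iff_adj).2 h1
    omega
  have hv2 : v ∉ p2.support := by
    intro hv
    have := geodesic_split hconn p2 hl2 hv
    have : G.dist w2 v = 1 := by
      rw [SimpleGraph.dist_comm]; exact (SimpleGraph.dist_eq_one_iff_adj).2 h2
    omega
  have hr1 : (SimpleGraph.Walk.cons h1 p1).IsPath := hp1.cons hv1
  have hr2 : (SimpleGraph.Walk.cons h2 p2).IsPath := hp2.cons hv2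
  have heq := SimpleGraph.isAcyclic_iff_path_unique.mp hacyc ⟨_, hr1⟩ ⟨_, hr2⟩
  have hsupp : (SimpleGraph.Walk.cons h1 p1).support = (SimpleGraph.Walk.cons h2 p2).support :=
    congrArg (fun (z : G.Path v x) => z.1.support) heq
  rw [SimpleGraph.Walk.support_cons, SimpleGraph.Walk.support_cons,
    SimpleGraph.Walk.support_eq_cons p1, SimpleGraph.Walk.support_eq_cons p2] at hsupp
  exact (List.cons.injEq _ _ _ _ ▸ hsupp).2 |> fun h => (List.cons.injEq _ _ _ _ ▸ h).1

/-- Moving one step away from `v` along an edge stays in the branch. -/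
lemma branch_closed_up (hconn : G.Connected) (hacyc : G.IsAcyclic) {v w x y : V}
    (hw : G.Adj v w) (hx : x ∈ branch G v w) (hxy : G.Adj x y)
    (hy : G.dist v y = G.dist v x + 1) : y ∈ branch G v w := by
  rw [mem_branch] at hx ⊢
  have h1 : G.dist w y ≤ G.dist w x + G.dist x y := hconn.dist_triangle
  have h2 : G.dist x y = 1 := (SimpleGraph.dist_eq_one_iff_adj).2 hxy
  rcases tree_dist_step hconn hacyc hw y with h | h
  · exact h
  · omega

/-- Branches are closed under edges not returning to the base vertex. -/
lemma branch_closed (hconn : G.Connected) (hacyc : G.IsAcyclic) {v w x y : V}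
    (hw : G.Adj v w) (hx : x ∈ branch G v w) (hxy : G.Adj x y)
    (hyv : y ≠ v) : y ∈ branch G v w := by
  rcases tree_dist_step hconn hacyc hxy v with h | h
  · -- dist x v = dist y v + 1, i.e. dist v y = dist v x - 1
    obtain ⟨w2, hw2, hyw2⟩ := exists_branch hconn hyv
    have hxw2 : x ∈ branch G v w2 := by
      refine branch_closed_up hconn hacyc hw2 hyw2 hxy.symm ?_
      rw [SimpleGraph.dist_comm (u := x) (v := v), SimpleGraph.dist_comm (u := y) (v := v)] at h
      omega
    have := branch_disjoint hconn hacyc hw hw2 hx hxw2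
    exact this ▸ hyw2
  · refine branch_closed_up hconn hacyc hw hx hxy ?_
    rw [SimpleGraph.dist_comm (u := y) (v := v), SimpleGraph.dist_comm (u := x) (v := v)] at h
    omega

/-- A child branch is contained in the parent branch minus the root. -/
lemma branch_subset (hconn : G.Connected) (hacyc : G.IsAcyclic) {u v w : V}
    (huv : G.Adj u v) (hvw : G.Adj v w) (hwu : w ≠ u) {x : V}
    (hx : x ∈ branch G v w) : x ∈ branch G u v ∧ x ≠ v := by
  refine ⟨?_, ne_of_mem_branch hx⟩
  rcases tree_dist_step hconn hacyc huv x with h | h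
  · exact mem_branch.mpr h
  · exfalso
    have hxu : x ∈ branch G v u := mem_branch.mpr h
    exact hwu (branch_disjoint hconn hacyc hvw huv.symm hx hxu)

lemma branch_card_lt (hconn : G.Connected) (hacyc : G.IsAcyclic) {u v w : V}
    (huv : G.Adj u v) (hvw : G.Adj v w) (hwu : w ≠ u) :
    (branch G v w).card + 1 ≤ (branch G u v).card := by
  have hsub : branch G v w ⊆ (branch G u v).erase v := by
    intro x hx
    obtain ⟨h1, h2⟩ := branch_subset hconn hacyc huv hvw hwu hx
    exact Finset.mem_erase.mpr ⟨h2, h1⟩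
  have h1 := Finset.card_le_card hsub
  have h2 : ((branch G u v).erase v).card + 1 = (branch G u v).card :=
    Finset.card_erase_add_one (root_mem_branch hconn huv)
  omega

/-- Within a branch, the only neighbor of the base vertex is the root. -/
lemma adj_root_iff (hconn : G.Connected) {v w x : V} (hvw : G.Adj v w)
    (hx : x ∈ branch G v w) : G.Adj v x ↔ x = w := by
  constructor
  · intro h
    rw [mem_branch] at hx
    have : G.dist v x = 1 := (SimpleGraph.dist_eq_one_iff_adj).2 h
    have : G.dist w x = 0 := by omega
    exact (hconn.dist_eq_zero_iff.mp (by rw [SimpleGraph.dist_comm] at this; exact this))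
  · rintro rfl; exact hvw

/-- Extract a correlating bijection from equal multiset images. -/
lemma exists_bijOn_of_rel {α β : Type} [Nonempty β] {r : α → β → Prop}
    {s : Multiset α} {t : Multiset β} (h : Multiset.Rel r s t)
    (hs : s.Nodup) (ht : t.Nodup) :
    ∃ σ : α → β, Set.BijOn σ {a | a ∈ s} {b | b ∈ t} ∧ ∀ a ∈ s, r a (σ a) := by
  induction h with
  | zero =>
    exact ⟨fun _ => Classical.arbitrary β, by simp [Set.BijOn, Set.MapsTo, Set.InjOn, Set.SurjOn], by simp⟩
  | @cons a b as bs hab hrel ih =>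
    have hs' : as.Nodup := (Multiset.nodup_cons.mp hs).2
    have ht' : bs.Nodup := (Multiset.nodup_cons.mp ht).2
    have ha : a ∉ as := (Multiset.nodup_cons.mp hs).1
    have hb : b ∉ bs := (Multiset.nodup_cons.mp ht).1
    obtain ⟨σ0, hbij, hr0⟩ := ih hs' ht'
    refine ⟨fun x => if x = a then b else σ0 x, ?_, ?_⟩
    · have hset : {x | x ∈ a ::ₘ as} = insert a {x | x ∈ as} := by ext x; simp
      have htet : {y | y ∈ b ::ₘ bs} = insert b {y | y ∈ bs} := by ext y; simp
      rw [hset, htet]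
      have hb2 : Set.BijOn (fun x => if x = a then b else σ0 x) {x | x ∈ as} {y | y ∈ bs} := by
        refine hbij.congr ?_
        intro x hx
        simp only []
        rw [if_neg]
        rintro rfl; exact ha hx
      have := hb2.insert (a := a) ?_
      · simpa using this
      · simpa using hb
    · intro x hx
      rcases Multiset.mem_cons.mp hx with rfl | hx'
      · simpa using hab
      · have : x ≠ a := by rintro rfl; exact ha hx'
        simpa [this] using hr0 x hx'

section WL
variable {C V' : Type} [Fintype V'] {G' : SimpleGraph V'} {c0 : V → C} {c0' : V' → C}

lemma wl_fst {t : ℕ} {v : V} {v' : V'}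
    (h : wlColoring G c0 (t+1) v = wlColoring G' c0' (t+1) v') :
    wlColoring G c0 t v = wlColoring G' c0' t v' := by
  simp only [wlColoring] at h
  exact (Prod.ext_iff.mp h).1

lemma wl_snd {t : ℕ} {v : V} {v' : V'}
    (h : wlColoring G c0 (t+1) v = wlColoring G' c0' (t+1) v') :
    (G.neighborFinset v).val.map (wlColoring G c0 t)
      = (G'.neighborFinset v').val.map (wlColoring G' c0' t) := by
  simp only [wlColoring] at h
  exact (Prod.ext_iff.mp h).2

lemma map_erase_mem {α γ : Type} [DecidableEq α] [DecidableEq γ] (f : α → γ)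
    {m : Multiset α} {u : α} (hu : u ∈ m) :
    (m.erase u).map f = (m.map f).erase (f u) := by
  conv_rhs => rw [← Multiset.cons_erase hu]
  rw [Multiset.map_cons, Multiset.erase_cons_head]

end WL

section Main
variable {C V' : Type} [Fintype V'] {G' : SimpleGraph V'} {c0 : V → C} {c0' : V' → C}

lemma wl_branch_iso (hconn : G.Connected) (hacyc : G.IsAcyclic)
    (hconn' : G'.Connected) (hacyc' : G'.IsAcyclic) :
    ∀ (t : ℕ) (u v : V) (u' v' : V'), G.Adj u v → G'.Adj u' v' →
      wlColoring G c0 t u = wlColoring G' c0' t u' →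
      wlColoring G c0 (t+1) v = wlColoring G' c0' (t+1) v' →
      (branch G u v).card ≤ t + 1 → (branch G' u' v').card ≤ t + 1 →
      ∃ φ : V → V', φ v = v' ∧
        Set.BijOn φ ↑(branch G u v) ↑(branch G' u' v') ∧
        ∀ x ∈ branch G u v, ∀ y ∈ branch G u v, (G.Adj x y ↔ G'.Adj (φ x) (φ y)) := by
  intro t
  induction t with
  | zero =>
    intro u v u' v' huv hu'v' _ _ hcard hcard'
    have hb : branch G u v = {v} :=
      Finset.eq_singleton_iff_unique_mem.mpr ⟨root_mem_branch hconn huv,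
        fun x hx => Finset.card_le_one.mp hcard x hx v (root_mem_branch hconn huv)⟩
    have hb' : branch G' u' v' = {v'} :=
      Finset.eq_singleton_iff_unique_mem.mpr ⟨root_mem_branch hconn' hu'v',
        fun x hx => Finset.card_le_one.mp hcard' x hx v' (root_mem_branch hconn' hu'v')⟩
    refine ⟨fun _ => v', rfl, ?_, ?_⟩
    · rw [hb, hb']
      simp [Set.bijOn_singleton]
    · intro x hx y hy
      rw [hb] at hx hy
      simp only [Finset.mem_singleton] at hx hy
      subst hx; subst hy
      simp [SimpleGraph.irrefl]
  | succ t IH =>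
    intro u v u' v' huv hu'v' hu hv hcard hcard'
    have _ : Nonempty V' := hconn'.nonempty
    have hv1 : wlColoring G c0 (t+1) v = wlColoring G' c0' (t+1) v' := wl_fst hv
    have hv0 : wlColoring G c0 t v = wlColoring G' c0' t v' := wl_fst hv1
    have hM := wl_snd hv
    have hun : u ∈ G.neighborFinset v := (SimpleGraph.mem_neighborFinset _ _ _).mpr huv.symm
    have hun' : u' ∈ G'.neighborFinset v' := (SimpleGraph.mem_neighborFinset _ _ _).mpr hu'v'.symm
    set s : Finset V := (G.neighborFinset v).erase u with hsdef
    set s' : Finset V' := (G'.neighborFinset v').erase u' with hs'def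
    have hmem_s : ∀ w, w ∈ s → w ≠ u ∧ G.Adj v w := by
      intro w hw
      rw [hsdef, Finset.mem_erase, SimpleGraph.mem_neighborFinset] at hw
      exact hw
    have hmem_s' : ∀ w', w' ∈ s' → w' ≠ u' ∧ G'.Adj v' w' := by
      intro w' hw'
      rw [hs'def, Finset.mem_erase, SimpleGraph.mem_neighborFinset] at hw'
      exact hw'
    have hsmap : s.val.map (wlColoring G c0 (t+1))
        = s'.val.map (wlColoring G' c0' (t+1)) := by
      rw [hsdef, hs'def, Finset.erase_val, Finset.erase_val,
        map_erase_mem _ (Finset.mem_val.mpr hun), map_erase_mem _ (Finset.mem_val.mpr hun'),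
        hM, hu]
    obtain ⟨σ, hσbij, hσ⟩ := exists_bijOn_of_rel
      (Multiset.rel_map.mp (Multiset.rel_eq.mpr hsmap)) s.nodup s'.nodup
    have hσs : ∀ w, w ∈ s → σ w ∈ s' := by
      intro w hw
      exact Finset.mem_val.mp (hσbij.mapsTo (Finset.mem_val.mpr hw))
    -- uniqueness of the branch containing a point
    have uniq : ∀ {w1 w2 x : V}, w1 ∈ s → w2 ∈ s → x ∈ branch G v w1 →
        x ∈ branch G v w2 → w1 = w2 := by
      intro w1 w2 x h1 h2 hx1 hx2
      exact branch_disjoint hconn hacyc (hmem_s _ h1).2 (hmem_s _ h2).2 hx1 hx2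
    have uniq' : ∀ {w1 w2 : V'} {x : V'}, w1 ∈ s' → w2 ∈ s' → x ∈ branch G' v' w1 →
        x ∈ branch G' v' w2 → w1 = w2 := by
      intro w1 w2 x h1 h2 hx1 hx2
      exact branch_disjoint hconn' hacyc' (hmem_s' _ h1).2 (hmem_s' _ h2).2 hx1 hx2
    -- every point of the big branch other than v lies in a unique child branch
    have hex : ∀ x ∈ branch G u v, x ≠ v → ∃ w, ∃ _ : w ∈ s, x ∈ branch G v w := by
      intro x hx hxv
      obtain ⟨w, hvw, hxw⟩ := exists_branch hconn hxv
      have hwu : w ≠ u := by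
        rintro rfl
        rw [mem_branch] at hx hxw
        omega
      exact ⟨w, hsdef ▸ Finset.mem_erase.mpr ⟨hwu,
        (SimpleGraph.mem_neighborFinset _ _ _).mpr hvw⟩, hxw⟩
    have hex' : ∀ y' ∈ branch G' u' v', y' ≠ v' →
        ∃ w', ∃ _ : w' ∈ s', y' ∈ branch G' v' w' := by
      intro y' hy' hyv'
      obtain ⟨w', hvw', hyw'⟩ := exists_branch hconn' hyv'
      have hwu' : w' ≠ u' := by
        rintro rfl
        rw [mem_branch] at hy' hyw'
        omega
      exact ⟨w', hs'def ▸ Finset.mem_erase.mpr ⟨hwu',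
        (SimpleGraph.mem_neighborFinset _ _ _).mpr hvw'⟩, hyw'⟩
    -- apply the induction hypothesis to each child branch
    have key : ∀ w (hw : w ∈ s), ∃ φ : V → V', φ w = σ w ∧
        Set.BijOn φ ↑(branch G v w) ↑(branch G' v' (σ w)) ∧
        ∀ x ∈ branch G v w, ∀ y ∈ branch G v w, (G.Adj x y ↔ G'.Adj (φ x) (φ y)) := by
      intro w hw
      obtain ⟨hwu, hvw⟩ := hmem_s w hw
      obtain ⟨hwu', hvw'⟩ := hmem_s' _ (hσs w hw)
      have hc1 : (branch G v w).card ≤ t + 1 := by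
        have := branch_card_lt hconn hacyc huv hvw hwu
        omega
      have hc2 : (branch G' v' (σ w)).card ≤ t + 1 := by
        have := branch_card_lt hconn' hacyc' hu'v' hvw' hwu'
        omega
      exact IH v w v' (σ w) hvw hvw' hv0 (hσ w (Finset.mem_val.mpr hw)) hc1 hc2
    choose Φ hΦroot hΦbij hΦadj using key
    -- assemble the global map
    set E : V → Prop := fun x => ∃ w, ∃ _ : w ∈ s, x ∈ branch G v w with hEdef
    have hφ : ∃ φ : V → V', (∀ x, ¬ E x → φ x = v') ∧
        ∀ x w (hw : w ∈ s), x ∈ branch G v w → φ x = Φ w hw x := by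
      refine ⟨fun x => if hx : E x then Φ hx.choose hx.choose_spec.choose x else v', ?_, ?_⟩
      · intro x hx; simp only [dif_neg hx]
      · intro x w hw hx
        have hE : E x := ⟨w, hw, hx⟩
        simp only [dif_pos hE]
        have heq : hE.choose = w := uniq hE.choose_spec.choose hw hE.choose_spec.choose_spec hx
        subst heq
        rfl
    obtain ⟨φ, hφ_out, hφ_in⟩ := hφ
    have hnEv : ¬ E v := by
      rintro ⟨w, hw, hx⟩
      exact ne_of_mem_branch hx rfl
    have hφv : φ v = v' := hφ_out v hnEv
    -- membership image facts
    have himg : ∀ x w (hw : w ∈ s), x ∈ branch G v w → φ x ∈ branch G' v' (σ w) := by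
      intro x w hw hx
      rw [hφ_in x w hw hx]
      exact Finset.mem_coe.mp ((hΦbij w hw).mapsTo (Finset.mem_coe.mpr hx))
    refine ⟨φ, hφv, ⟨?_, ?_, ?_⟩, ?_⟩
    · -- MapsTo
      intro x hx
      rw [Finset.mem_coe] at hx ⊢
      by_cases hxv : x = v
      · subst hxv; rw [hφv]; exact root_mem_branch hconn' hu'v'
      · obtain ⟨w, hw, hxw⟩ := hex x hx hxv
        obtain ⟨hwu', hvw'⟩ := hmem_s' _ (hσs w hw)
        exact (branch_subset hconn' hacyc' hu'v' hvw' hwu' (himg x w hw hxw)).1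
    · -- InjOn
      intro x hx y hy hxy
      rw [Finset.mem_coe] at hx hy
      by_cases hxv : x = v <;> by_cases hyv : y = v
      · rw [hxv, hyv]
      · exfalso
        obtain ⟨w, hw, hyw⟩ := hex y hy hyv
        have := himg y w hw hyw
        rw [← hxy, hxv, hφv] at this
        exact ne_of_mem_branch this rfl
      · exfalso
        obtain ⟨w, hw, hxw⟩ := hex x hx hxv
        have := himg x w hw hxw
        rw [hxy, hyv, hφv] at this
        exact ne_of_mem_branch this rfl
      · obtain ⟨wx, hwx, hxw⟩ := hex x hx hxv
        obtain ⟨wy, hwy, hyw⟩ := hex y hy hyv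
        have hwxy : wx = wy := by
          have h1 := himg x wx hwx hxw
          have h2 := himg y wy hwy hyw
          rw [hxy] at h1
          have : σ wx = σ wy := uniq' (hσs _ hwx) (hσs _ hwy) h1 h2
          exact hσbij.injOn (Finset.mem_val.mpr hwx) (Finset.mem_val.mpr hwy) this
        subst hwxy
        have h1 := hφ_in x wx hwx hxw
        have h2 := hφ_in y wx hwx hyw
        rw [h1, h2] at hxy
        exact (hΦbij wx hwx).injOn (Finset.mem_coe.mpr hxw) (Finset.mem_coe.mpr hyw) hxy
    · -- SurjOn
      intro y' hy'
      rw [Finset.mem_coe] at hy'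
      by_cases hyv' : y' = v'
      · exact ⟨v, Finset.mem_coe.mpr (root_mem_branch hconn huv), by rw [hφv, hyv']⟩
      · obtain ⟨w', hw', hyw'⟩ := hex' y' hy' hyv'
        obtain ⟨w, hws, hσw⟩ : ∃ w, ∃ _ : w ∈ s, σ w = w' := by
          obtain ⟨w, hw, hσw⟩ := hσbij.surjOn (Finset.mem_val.mpr hw')
          exact ⟨w, Finset.mem_val.mp hw, hσw⟩
        obtain ⟨x, hx, hΦx⟩ := (hΦbij w hws).surjOn
          (Finset.mem_coe.mpr (by rw [hσw]; exact hyw'))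
        rw [Finset.mem_coe] at hx
        obtain ⟨hwu, hvw⟩ := hmem_s w hws
        refine ⟨x, Finset.mem_coe.mpr (branch_subset hconn hacyc huv hvw hwu hx).1, ?_⟩
        rw [hφ_in x w hws hx]
        exact hΦx
    · -- adjacency
      intro x hx y hy
      by_cases hxv : x = v <;> by_cases hyv : y = v
      · subst hxv; subst hyv
        rw [hφv]
        simp [SimpleGraph.irrefl]
      · subst hxv
        obtain ⟨w, hw, hyw⟩ := hex y hy hyv
        obtain ⟨hwu, hvw⟩ := hmem_s w hw
        obtain ⟨hwu', hvw'⟩ := hmem_s' _ (hσs w hw)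
        rw [hφv]
        rw [adj_root_iff hconn hvw hyw, adj_root_iff hconn' hvw' (himg y w hw hyw)]
        constructor
        · intro h
          rw [h, hφ_in w w hw (root_mem_branch hconn hvw)]
          exact hΦroot w hw
        · intro h
          have h2 : φ w = σ w := by rw [hφ_in w w hw (root_mem_branch hconn hvw)]; exact hΦroot w hw
          have := (hΦbij w hw).injOn (Finset.mem_coe.mpr hyw)
            (Finset.mem_coe.mpr (root_mem_branch hconn hvw))
          rw [← hφ_in y w hw hyw, ← hφ_in w w hw (root_mem_branch hconn hvw)] at this
          exact this (by rw [h, ← h2])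
      · subst hyv
        obtain ⟨w, hw, hxw⟩ := hex x hx hxv
        obtain ⟨hwu, hvw⟩ := hmem_s w hw
        obtain ⟨hwu', hvw'⟩ := hmem_s' _ (hσs w hw)
        rw [hφv, G.adj_comm, G'.adj_comm]
        rw [adj_root_iff hconn hvw hxw, adj_root_iff hconn' hvw' (himg x w hw hxw)]
        constructor
        · intro h
          rw [h, hφ_in w w hw (root_mem_branch hconn hvw)]
          exact hΦroot w hw
        · intro h
          have h2 : φ w = σ w := by rw [hφ_in w w hw (root_mem_branch hconn hvw)]; exact hΦroot w hw
          have := (hΦbij w hw).injOn (Finset.mem_coe.mpr hxw)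
            (Finset.mem_coe.mpr (root_mem_branch hconn hvw))
          rw [← hφ_in x w hw hxw, ← hφ_in w w hw (root_mem_branch hconn hvw)] at this
          exact this (by rw [h, ← h2])
      · obtain ⟨wx, hwx, hxw⟩ := hex x hx hxv
        obtain ⟨wy, hwy, hyw⟩ := hex y hy hyv
        by_cases hww : wx = wy
        · subst hww
          rw [hφ_in x wx hwx hxw, hφ_in y wx hwx hyw]
          exact hΦadj wx hwx x hxw y hyw
        · constructor
          · intro hadj
            exfalso
            have := branch_closed hconn hacyc (hmem_s wx hwx).2 hxw hadj hyv
            exact hww (uniq hwx hwy this hyw)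
          · intro hadj
            exfalso
            have h1 := himg x wx hwx hxw
            have h2 := himg y wy hwy hyw
            have hyv' : φ y ≠ v' := ne_of_mem_branch h2
            have := branch_closed hconn' hacyc' (hmem_s' _ (hσs wx hwx)).2 h1 hadj hyv'
            exact hww (hσbij.injOn (Finset.mem_val.mpr hwx) (Finset.mem_val.mpr hwy)
              (uniq' (hσs wx hwx) (hσs wy hwy) this h2))

end Main

theorem wl_distinguishes_trees_aux {V V' C : Type} [Fintype V] [Fintype V']
    (G : SimpleGraph V) (G' : SimpleGraph V')
    (hconn : G.Connected) (hacyc : G.IsAcyclic)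
    (hconn' : G'.Connected) (hacyc' : G'.IsAcyclic)
    (c : C) (hnoniso : IsEmpty (G ≃g G')) :
    ∃ t : ℕ,
      Multiset.map (wlColoring G (fun _ => c) t) Finset.univ.val
        ≠ Multiset.map (wlColoring G' (fun _ => c) t) Finset.univ.val := by
  by_contra hcon
  push_neg at hcon
  set c0 : V → C := fun _ => c with hc0
  set c0' : V' → C := fun _ => c with hc0'
  have _ : Nonempty V := hconn.nonempty
  have _ : Nonempty V' := hconn'.nonempty
  set T : ℕ := Fintype.card V + Fintype.card V' with hT
  have hcV : 1 ≤ Fintype.card V := Fintype.card_pos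
  have hcV' : 1 ≤ Fintype.card V' := Fintype.card_pos
  have h := hcon (T + 2)
  set v₀ : V := Classical.arbitrary V with hv₀
  have hmem : wlColoring G c0 (T+2) v₀ ∈
      Multiset.map (wlColoring G c0 (T+2)) Finset.univ.val :=
    Multiset.mem_map_of_mem _ (Finset.mem_val.mpr (Finset.mem_univ v₀))
  rw [h] at hmem
  obtain ⟨v₀', _, hvv⟩ := Multiset.mem_map.mp hmem
  have hv : wlColoring G c0 (T+2) v₀ = wlColoring G' c0' (T+2) v₀' := hvv.symm
  have hv1 : wlColoring G c0 (T+1) v₀ = wlColoring G' c0' (T+1) v₀' := wl_fst hv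
  have hv0 : wlColoring G c0 T v₀ = wlColoring G' c0' T v₀' := wl_fst hv1
  have hM := wl_snd hv
  set s : Finset V := G.neighborFinset v₀ with hsdef
  set s' : Finset V' := G'.neighborFinset v₀' with hs'def
  have hmem_s : ∀ w, w ∈ s → G.Adj v₀ w := by
    intro w hw; rwa [hsdef, SimpleGraph.mem_neighborFinset] at hw
  have hmem_s' : ∀ w', w' ∈ s' → G'.Adj v₀' w' := by
    intro w' hw'; rwa [hs'def, SimpleGraph.mem_neighborFinset] at hw'
  obtain ⟨σ, hσbij, hσ⟩ := exists_bijOn_of_rel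
    (Multiset.rel_map.mp (Multiset.rel_eq.mpr hM)) s.nodup s'.nodup
  have hσs : ∀ w, w ∈ s → σ w ∈ s' := by
    intro w hw
    exact Finset.mem_val.mp (hσbij.mapsTo (Finset.mem_val.mpr hw))
  have uniq : ∀ {w1 w2 x : V}, w1 ∈ s → w2 ∈ s → x ∈ branch G v₀ w1 →
      x ∈ branch G v₀ w2 → w1 = w2 := by
    intro w1 w2 x h1 h2 hx1 hx2
    exact branch_disjoint hconn hacyc (hmem_s _ h1) (hmem_s _ h2) hx1 hx2
  have uniq' : ∀ {w1 w2 : V'} {x : V'}, w1 ∈ s' → w2 ∈ s' → x ∈ branch G' v₀' w1 →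
      x ∈ branch G' v₀' w2 → w1 = w2 := by
    intro w1 w2 x h1 h2 hx1 hx2
    exact branch_disjoint hconn' hacyc' (hmem_s' _ h1) (hmem_s' _ h2) hx1 hx2
  have hex : ∀ x : V, x ≠ v₀ → ∃ w, ∃ _ : w ∈ s, x ∈ branch G v₀ w := by
    intro x hxv
    obtain ⟨w, hvw, hxw⟩ := exists_branch hconn hxv
    exact ⟨w, hsdef ▸ (SimpleGraph.mem_neighborFinset _ _ _).mpr hvw, hxw⟩
  have hex' : ∀ y' : V', y' ≠ v₀' → ∃ w', ∃ _ : w' ∈ s', y' ∈ branch G' v₀' w' := by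
    intro y' hyv'
    obtain ⟨w', hvw', hyw'⟩ := exists_branch hconn' hyv'
    exact ⟨w', hs'def ▸ (SimpleGraph.mem_neighborFinset _ _ _).mpr hvw', hyw'⟩
  have key : ∀ w (hw : w ∈ s), ∃ φ : V → V', φ w = σ w ∧
      Set.BijOn φ ↑(branch G v₀ w) ↑(branch G' v₀' (σ w)) ∧
      ∀ x ∈ branch G v₀ w, ∀ y ∈ branch G v₀ w, (G.Adj x y ↔ G'.Adj (φ x) (φ y)) := by
    intro w hw
    have hc1 : (branch G v₀ w).card ≤ T + 1 := by
      have := Finset.card_le_univ (branch G v₀ w)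
      omega
    have hc2 : (branch G' v₀' (σ w)).card ≤ T + 1 := by
      have := Finset.card_le_univ (branch G' v₀' (σ w))
      omega
    exact wl_branch_iso hconn hacyc hconn' hacyc' T v₀ w v₀' (σ w)
      (hmem_s w hw) (hmem_s' _ (hσs w hw)) hv0 (hσ w (Finset.mem_val.mpr hw)) hc1 hc2
  choose Φ hΦroot hΦbij hΦadj using key
  set E : V → Prop := fun x => ∃ w, ∃ _ : w ∈ s, x ∈ branch G v₀ w with hEdef
  have hφ : ∃ φ : V → V', (∀ x, ¬ E x → φ x = v₀') ∧
      ∀ x w (hw : w ∈ s), x ∈ branch G v₀ w → φ x = Φ w hw x := by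
    refine ⟨fun x => if hx : E x then Φ hx.choose hx.choose_spec.choose x else v₀', ?_, ?_⟩
    · intro x hx; simp only [dif_neg hx]
    · intro x w hw hx
      have hE : E x := ⟨w, hw, hx⟩
      simp only [dif_pos hE]
      have heq : hE.choose = w := uniq hE.choose_spec.choose hw hE.choose_spec.choose_spec hx
      subst heq
      rfl
  obtain ⟨φ, hφ_out, hφ_in⟩ := hφ
  have hnEv : ¬ E v₀ := by
    rintro ⟨w, hw, hx⟩
    exact ne_of_mem_branch hx rfl
  have hφv : φ v₀ = v₀' := hφ_out v₀ hnEv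
  have himg : ∀ x w (hw : w ∈ s), x ∈ branch G v₀ w → φ x ∈ branch G' v₀' (σ w) := by
    intro x w hw hx
    rw [hφ_in x w hw hx]
    exact Finset.mem_coe.mp ((hΦbij w hw).mapsTo (Finset.mem_coe.mpr hx))
  -- injectivity
  have hinj : Function.Injective φ := by
    intro x y hxy
    by_cases hxv : x = v₀ <;> by_cases hyv : y = v₀
    · rw [hxv, hyv]
    · exfalso
      obtain ⟨w, hw, hyw⟩ := hex y hyv
      have := himg y w hw hyw
      rw [← hxy, hxv, hφv] at this
      exact ne_of_mem_branch this rfl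
    · exfalso
      obtain ⟨w, hw, hxw⟩ := hex x hxv
      have := himg x w hw hxw
      rw [hxy, hyv, hφv] at this
      exact ne_of_mem_branch this rfl
    · obtain ⟨wx, hwx, hxw⟩ := hex x hxv
      obtain ⟨wy, hwy, hyw⟩ := hex y hyv
      have hwxy : wx = wy := by
        have h1 := himg x wx hwx hxw
        have h2 := himg y wy hwy hyw
        rw [hxy] at h1
        have : σ wx = σ wy := uniq' (hσs _ hwx) (hσs _ hwy) h1 h2
        exact hσbij.injOn (Finset.mem_val.mpr hwx) (Finset.mem_val.mpr hwy) this
      subst hwxy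
      have h1 := hφ_in x wx hwx hxw
      have h2 := hφ_in y wx hwx hyw
      rw [h1, h2] at hxy
      exact (hΦbij wx hwx).injOn (Finset.mem_coe.mpr hxw) (Finset.mem_coe.mpr hyw) hxy
  -- surjectivity
  have hsurj : Function.Surjective φ := by
    intro y'
    by_cases hyv' : y' = v₀'
    · exact ⟨v₀, by rw [hφv, hyv']⟩
    · obtain ⟨w', hw', hyw'⟩ := hex' y' hyv'
      obtain ⟨w, hws, hσw⟩ : ∃ w, ∃ _ : w ∈ s, σ w = w' := by
        obtain ⟨w, hw, hσw⟩ := hσbij.surjOn (Finset.mem_val.mpr hw')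
        exact ⟨w, Finset.mem_val.mp hw, hσw⟩
      obtain ⟨x, hx, hΦx⟩ := (hΦbij w hws).surjOn
        (Finset.mem_coe.mpr (by rw [hσw]; exact hyw'))
      rw [Finset.mem_coe] at hx
      exact ⟨x, by rw [hφ_in x w hws hx]; exact hΦx⟩
  -- adjacency
  have hadj : ∀ x y : V, G.Adj x y ↔ G'.Adj (φ x) (φ y) := by
    intro x y
    by_cases hxv : x = v₀ <;> by_cases hyv : y = v₀
    · subst hxv; subst hyv
      rw [hφv]
      simp [SimpleGraph.irrefl]
    · subst hxv
      obtain ⟨w, hw, hyw⟩ := hex y hyv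
      have hvw := hmem_s w hw
      have hvw' := hmem_s' _ (hσs w hw)
      rw [hφv]
      rw [adj_root_iff hconn hvw hyw, adj_root_iff hconn' hvw' (himg y w hw hyw)]
      constructor
      · intro h2
        rw [h2, hφ_in w w hw (root_mem_branch hconn hvw)]
        exact hΦroot w hw
      · intro h2
        have h3 : φ w = σ w := by
          rw [hφ_in w w hw (root_mem_branch hconn hvw)]; exact hΦroot w hw
        have := (hΦbij w hw).injOn (Finset.mem_coe.mpr hyw)
          (Finset.mem_coe.mpr (root_mem_branch hconn hvw))
        rw [← hφ_in y w hw hyw, ← hφ_in w w hw (root_mem_branch hconn hvw)] at this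
        exact this (by rw [h2, ← h3])
    · subst hyv
      obtain ⟨w, hw, hxw⟩ := hex x hxv
      have hvw := hmem_s w hw
      have hvw' := hmem_s' _ (hσs w hw)
      rw [hφv, G.adj_comm, G'.adj_comm]
      rw [adj_root_iff hconn hvw hxw, adj_root_iff hconn' hvw' (himg x w hw hxw)]
      constructor
      · intro h2
        rw [h2, hφ_in w w hw (root_mem_branch hconn hvw)]
        exact hΦroot w hw
      · intro h2
        have h3 : φ w = σ w := by
          rw [hφ_in w w hw (root_mem_branch hconn hvw)]; exact hΦroot w hw
        have := (hΦbij w hw).injOn (Finset.mem_coe.mpr hxw)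
          (Finset.mem_coe.mpr (root_mem_branch hconn hvw))
        rw [← hφ_in x w hw hxw, ← hφ_in w w hw (root_mem_branch hconn hvw)] at this
        exact this (by rw [h2, ← h3])
    · obtain ⟨wx, hwx, hxw⟩ := hex x hxv
      obtain ⟨wy, hwy, hyw⟩ := hex y hyv
      by_cases hww : wx = wy
      · subst hww
        rw [hφ_in x wx hwx hxw, hφ_in y wx hwx hyw]
        exact hΦadj wx hwx x hxw y hyw
      · constructor
        · intro hadj
          exfalso
          have := branch_closed hconn hacyc (hmem_s wx hwx) hxw hadj hyv
          exact hww (uniq hwx hwy this hyw)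
        · intro hadj
          exfalso
          have h1 := himg x wx hwx hxw
          have h2 := himg y wy hwy hyw
          have hyv2 : φ y ≠ v₀' := ne_of_mem_branch h2
          have := branch_closed hconn' hacyc' (hmem_s' _ (hσs wx hwx)) h1 hadj hyv2
          exact hww (hσbij.injOn (Finset.mem_val.mpr hwx) (Finset.mem_val.mpr hwy)
            (uniq' (hσs wx hwx) (hσs wy hwy) this h2))
  exact hnoniso.false
    { toEquiv := Equiv.ofBijective φ ⟨hinj, hsurj⟩
      map_rel_iff' := fun {a b} => (hadj a b).symm }

/-- The 1-WL algorithm distinguishes any pair of non-isomorphic trees: if `G` and `G'` are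
finite trees (nonempty connected acyclic simple graphs), both given the constant initial
coloring with the same value `c`, and there is no graph isomorphism between them, then at
some iteration the multisets of 1-WL colors of the two graphs differ. -/
theorem wl_distinguishes_trees {V V' C : Type} [Fintype V] [Fintype V']
    (G : SimpleGraph V) (G' : SimpleGraph V')
    (hconn : G.Connected) (hacyc : G.IsAcyclic)
    (hconn' : G'.Connected) (hacyc' : G'.IsAcyclic)
    (c : C) (hnoniso : IsEmpty (G ≃g G')) :
    ∃ t : ℕ,
      Multiset.map (wlColoring G (fun _ => c) t) Finset.univ.val
        ≠ Multiset.map (wlColoring G' (fun _ => c) t) Finset.univ.val := by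
  exact wl_distinguishes_trees_aux G G' hconn hacyc hconn' hacyc' c hnoniso
end
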